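/- arXiv:2407.14809 — 12 statements merged into one kernel-verified Lean document; each statement's English description precedes it below -/
import Mathlib

section
/- Let λ ∈ ℂ ∪ {∞}. Let W be the Witt algebra and let A(λ) and B(λ) be the W-modules defined below. Then the linear map f : B(λ) → A(λ) determined by f(B_n) = n·A_n for all n ∈ ℤ is a homomorphism of W-modules; its kernel is the line ℂ·B_0 and its image is the subspace spanned by {A_n : n ∈ ℤ, n ≠ 0}. -/
/-- The coefficient `n(n+1)λ`, where `λ = ∞` (encoded by `none`) gives `n²`. -/
def lamTerm (lam : Option ℂ) (n : ℤ) : ℂ :=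
  match lam with
  | some l => (n : ℂ) * ((n : ℂ) + 1) * l
  | none => (n : ℂ) ^ 2

/-!
Both sides of `f ⁅L_n, B_m⁆ = ⁅L_n, f B_m⁆` are bilinear in `(L_n, B_m)`, so it suffices to compare
them on basis vectors, where the correction terms `δ_{n+m,0}` and `δ_{m,0}` are killed by the
factors `n + m` and `m` that `f` contributes. Since `f` is diagonal in the bases `B_n`, `A_n`
with eigenvalues `n`, its kernel is spanned by the `B_n` with `n = 0` and its image by the `A_n`
with `n ≠ 0`.
-/

section LieHom

variable {R L M N : Type*} [CommRing R] [LieRing L] [LieAlgebra R L]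
  [AddCommGroup M] [Module R M] [LieRingModule L M] [LieModule R L M]
  [AddCommGroup N] [Module R N] [LieRingModule L N] [LieModule R L N]

theorem LinearMap.map_lie_of_basis {ι κ : Type*} (bL : Module.Basis ι R L)
    (bM : Module.Basis κ R M) (f : M →ₗ[R] N)
    (h : ∀ i j, f ⁅bL i, bM j⁆ = ⁅bL i, f (bM j)⁆) (w : L) (x : M) :
    f ⁅w, x⁆ = ⁅w, f x⁆ := by
  have hbilin : (LieModule.toEnd R L M : L →ₗ[R] Module.End R M).compr₂ f =
      (LieModule.toEnd R L N : L →ₗ[R] Module.End R N).compl₂ f :=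
    bL.ext fun i => bM.ext fun j => by simpa using h i j
  simpa using LinearMap.congr_fun₂ hbilin w x

end LieHom

section Diagonal

variable {K M N ι : Type*} [Field K] [AddCommGroup M] [Module K M] [AddCommGroup N] [Module K N]
  (bM : Module.Basis ι K M) (bN : Module.Basis ι K N) (c : ι → K) {f : M →ₗ[K] N}

theorem repr_apply_of_apply_basis_eq_smul (hf : ∀ i, f (bM i) = c i • bN i) (x : M) (i : ι) :
    bN.repr (f x) i = c i * bM.repr x i := by
  have hcoord : (Finsupp.lapply i ∘ₗ bN.repr.toLinearMap ∘ₗ f) =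
      c i • (Finsupp.lapply i ∘ₗ bM.repr.toLinearMap) := by
    refine bM.ext fun j => ?_
    rcases eq_or_ne j i with rfl | hji
    · simp [hf]
    · simp [hf, hji]
  simpa using LinearMap.congr_fun hcoord x

theorem ker_eq_span_of_apply_basis_eq_smul (hf : ∀ i, f (bM i) = c i • bN i) :
    LinearMap.ker f = Submodule.span K (bM '' {i | c i = 0}) := by
  apply le_antisymm
  · intro x hx
    rw [bM.mem_span_image]
    intro i hi
    have hfx : bN.repr (f x) i = 0 := by rw [LinearMap.mem_ker.mp hx, map_zero]; rfl
    rw [repr_apply_of_apply_basis_eq_smul bM bN c hf] at hfx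
    exact (mul_eq_zero.mp hfx).resolve_right (Finsupp.mem_support_iff.mp hi)
  · rw [Submodule.span_le]
    rintro _ ⟨i, hi, rfl⟩
    simp [hf, show c i = 0 from hi]

theorem range_eq_span_of_apply_basis_eq_smul (hf : ∀ i, f (bM i) = c i • bN i) :
    LinearMap.range f = Submodule.span K (bN '' {i | c i ≠ 0}) := by
  rw [LinearMap.range_eq_map, ← bM.span_eq, Submodule.map_span, ← Set.range_comp]
  apply le_antisymm
  · rw [Submodule.span_le]
    rintro _ ⟨i, rfl⟩
    rcases eq_or_ne (c i) 0 with hi | hi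
    · simp [hf, hi]
    · simpa [hf] using Submodule.smul_mem (Submodule.span K (bN '' {i | c i ≠ 0})) (c i)
        (Submodule.subset_span ⟨i, hi, rfl⟩)
  · rw [Submodule.span_le]
    rintro _ ⟨i, hi, rfl⟩
    have hbi : bN i = (c i)⁻¹ • f (bM i) := by rw [hf, inv_smul_smul₀ hi]
    rw [SetLike.mem_coe, hbi]
    exact Submodule.smul_mem _ _ (Submodule.subset_span ⟨i, rfl⟩)

end Diagonal

theorem witt_coeff_identity (n m : ℤ) (t : ℂ) :
    ((m : ℂ) - (if n + m = 0 then t else 0)) * ((n + m : ℤ) : ℂ) =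
      (m : ℂ) * ((n : ℂ) + (m : ℂ) + (if m = 0 then t else 0)) := by
  have hcast : ((n + m : ℤ) : ℂ) = n + m := Int.cast_add n m
  split_ifs with hnm hm hm
  · rw [hnm]
    simp [hm]
  · rw [hnm, ← hcast, hnm]
    simp
  · simp [hm]
  · rw [hcast]
    ring

theorem stmt_0_general (lam : Option ℂ)
    (W : Type) [LieRing W] [LieAlgebra ℂ W] (bL : Module.Basis ℤ ℂ W)
    (M : Type) [AddCommGroup M] [Module ℂ M] [LieRingModule W M] [LieModule ℂ W M]
    (bB : Module.Basis ℤ ℂ M)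
    (hB : ∀ n m : ℤ,
      ⁅bL n, bB m⁆ = ((m : ℂ) - (if n + m = 0 then lamTerm lam n else 0)) • bB (n + m))
    (N : Type) [AddCommGroup N] [Module ℂ N] [LieRingModule W N] [LieModule ℂ W N]
    (bA : Module.Basis ℤ ℂ N)
    (hA : ∀ n m : ℤ,
      ⁅bL n, bA m⁆ = ((n : ℂ) + (m : ℂ) + (if m = 0 then lamTerm lam n else 0)) • bA (n + m))
    (f : M →ₗ[ℂ] N) (hf : ∀ n : ℤ, f (bB n) = (n : ℂ) • bA n) :
    (∀ (w : W) (x : M), f ⁅w, x⁆ = ⁅w, f x⁆) ∧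
    LinearMap.ker f = Submodule.span ℂ {bB 0} ∧
    LinearMap.range f = Submodule.span ℂ {y : N | ∃ n : ℤ, n ≠ 0 ∧ y = bA n} := by
  refine ⟨LinearMap.map_lie_of_basis bL bB f fun n m => ?_, ?_, ?_⟩
  · rw [hB, map_smul, hf, hf, lie_smul, hA, smul_smul, smul_smul, witt_coeff_identity]
  · have hzero : {n : ℤ | (n : ℂ) = 0} = {0} := by ext; simp
    rw [ker_eq_span_of_apply_basis_eq_smul bB bA _ hf, hzero, Set.image_singleton]
  · rw [range_eq_span_of_apply_basis_eq_smul bB bA _ hf]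
    congr 1
    ext y
    simp [eq_comm]

/-- the linear map `f : B(λ) → A(λ)` determined by `f(B_n) = n • A_n` is a
homomorphism of modules over the Witt algebra `W`; its kernel is the line `ℂ • B_0` and its
image is the span of `{A_n : n ≠ 0}`. -/
theorem stmt_0 (lam : Option ℂ)
    (W : Type) [LieRing W] [LieAlgebra ℂ W] (bL : Module.Basis ℤ ℂ W)
    (hW : ∀ n m : ℤ, ⁅bL n, bL m⁆ = ((m : ℂ) - (n : ℂ)) • bL (n + m))
    (M : Type) [AddCommGroup M] [Module ℂ M] [LieRingModule W M] [LieModule ℂ W M]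
    (bB : Module.Basis ℤ ℂ M)
    (hB : ∀ n m : ℤ,
      ⁅bL n, bB m⁆ = ((m : ℂ) - (if n + m = 0 then lamTerm lam n else 0)) • bB (n + m))
    (N : Type) [AddCommGroup N] [Module ℂ N] [LieRingModule W N] [LieModule ℂ W N]
    (bA : Module.Basis ℤ ℂ N)
    (hA : ∀ n m : ℤ,
      ⁅bL n, bA m⁆ = ((n : ℂ) + (m : ℂ) + (if m = 0 then lamTerm lam n else 0)) • bA (n + m))
    (f : M →ₗ[ℂ] N) (hf : ∀ n : ℤ, f (bB n) = (n : ℂ) • bA n) :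
    (∀ (w : W) (x : M), f ⁅w, x⁆ = ⁅w, f x⁆) ∧
    LinearMap.ker f = Submodule.span ℂ {bB 0} ∧
    LinearMap.range f = Submodule.span ℂ {y : N | ∃ n : ℤ, n ≠ 0 ∧ y = bA n} :=
  stmt_0_general lam W bL M bB hB N bA hA f hf
end

section
/- Let L be a complex Lie algebra that is an internal direct sum of vector subspaces L = g ⊕ h, where g is a Lie subalgebra of L and h is an abelian ideal of L. For an alternating bilinear map Ω : L × L → ℂ, write x = v₁ + w₁ and y = v₂ + w₂ with v_i ∈ g, w_i ∈ h, and define Ω_gg(x,y) = Ω(v₁,v₂), Ω_hh(x,y) = Ω(w₁,w₂), and Ω_gh(x,y) = Ω(v₁,w₂) + Ω(w₁,v₂). Then Ω is a 2-cocycle on L if and only if Ω_gg, Ω_hh, and Ω_gh are each 2-cocycles on L. In particular, every 2-cocycle Ω on L decomposes as Ω = Ω_gg + Ω_hh + Ω_gh with each summand a 2-cocycle. -/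
/-- The 2-cocycle condition (with trivial coefficients) for a not-necessarily-linear
ℂ-valued pairing on a Lie ring. -/
def IsTwoCocycleFn (L : Type*) [LieRing L] (f : L → L → ℂ) : Prop :=
  ∀ x y z : L, f ⁅x, y⁆ z + f ⁅y, z⁆ x + f ⁅z, x⁆ y = 0

/-- for a Lie algebra `L = g ⊕ h` with `g` a subalgebra and `h` an abelian
ideal (with linear projections `pg`, `ph` onto the two summands), an alternating bilinear
form `Ω` is a 2-cocycle iff its three components `Ω_gg`, `Ω_hh`, `Ω_gh` are 2-cocycles; in
particular every 2-cocycle decomposes as the sum of these three 2-cocycles. -/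
theorem stmt_1 (L : Type) [LieRing L] [LieAlgebra ℂ L]
    (g : LieSubalgebra ℂ L) (h : LieIdeal ℂ L)
    (habelian : ∀ x y : L, x ∈ h → y ∈ h → ⁅x, y⁆ = 0)
    (pg ph : L →ₗ[ℂ] L)
    (hpg : ∀ x : L, pg x ∈ g) (hph : ∀ x : L, ph x ∈ h)
    (hsum : ∀ x : L, pg x + ph x = x)
    (hdisj : ∀ x : L, x ∈ g → x ∈ h → x = 0)
    (Ω : L →ₗ[ℂ] L →ₗ[ℂ] ℂ) (halt : ∀ x : L, Ω x x = 0) :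
    (IsTwoCocycleFn L (fun x y => Ω x y) ↔
      (IsTwoCocycleFn L (fun x y => Ω (pg x) (pg y)) ∧
        IsTwoCocycleFn L (fun x y => Ω (ph x) (ph y)) ∧
        IsTwoCocycleFn L (fun x y => Ω (pg x) (ph y) + Ω (ph x) (pg y)))) ∧
    (IsTwoCocycleFn L (fun x y => Ω x y) →
      ∀ x y : L, Ω x y =
        Ω (pg x) (pg y) + Ω (ph x) (ph y) + (Ω (pg x) (ph y) + Ω (ph x) (pg y))) := by
  -- uniqueness of the decomposition
  have hpg' : ∀ a u : L, a ∈ g → u ∈ h → pg (a + u) = a := by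
    intro a u ha hu
    have h1 : pg (a + u) + ph (a + u) = a + u := hsum (a + u)
    have hgm : pg (a + u) - a ∈ g := g.sub_mem (hpg _) ha
    have hhm : pg (a + u) - a ∈ h := by
      have h2 : pg (a + u) - a = u - ph (a + u) := by
        rw [sub_eq_sub_iff_add_eq_add, h1]; abel
      rw [h2]; exact h.sub_mem hu (hph _)
    exact sub_eq_zero.mp (hdisj _ hgm hhm)
  have hph' : ∀ a u : L, a ∈ g → u ∈ h → ph (a + u) = u := by
    intro a u ha hu
    have h1 := hsum (a + u)
    rw [hpg' a u ha hu] at h1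
    exact add_left_cancel h1
  -- bracket decomposition
  have key : ∀ x y : L, ⁅x, y⁆ =
      ⁅pg x, pg y⁆ + (⁅pg x, ph y⁆ + ⁅ph x, pg y⁆) := by
    intro x y
    conv_lhs => rw [← hsum x, ← hsum y]
    rw [add_lie, lie_add, lie_add, habelian _ _ (hph x) (hph y)]
    abel
  have hmemh : ∀ x y : L, ⁅pg x, ph y⁆ + ⁅ph x, pg y⁆ ∈ h := by
    intro x y
    refine h.add_mem (h.lie_mem (hph y)) ?_
    have : ⁅ph x, pg y⁆ = -⁅pg y, ph x⁆ := by rw [lie_skew]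
    rw [this]; exact h.neg_mem (h.lie_mem (hph x))
  have hbg : ∀ x y : L, pg ⁅x, y⁆ = ⁅pg x, pg y⁆ := by
    intro x y
    rw [key x y, hpg' _ _ (g.lie_mem (hpg x) (hpg y)) (hmemh x y)]
  have hbh : ∀ x y : L, ph ⁅x, y⁆ = ⁅pg x, ph y⁆ + ⁅ph x, pg y⁆ := by
    intro x y
    rw [key x y, hph' _ _ (g.lie_mem (hpg x) (hpg y)) (hmemh x y)]
  -- decomposition of Ω
  have decomp : ∀ x y : L, Ω x y =
      Ω (pg x) (pg y) + Ω (ph x) (ph y) + (Ω (pg x) (ph y) + Ω (ph x) (pg y)) := by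
    intro x y
    conv_lhs => rw [← hsum x, ← hsum y]
    simp only [map_add, LinearMap.add_apply]
    ring
  constructor
  · constructor
    · intro hc
      refine ⟨?_, ?_, ?_⟩
      · intro x y z
        simp only [hbg]
        exact hc (pg x) (pg y) (pg z)
      · intro x y z
        simp only [hbh, map_add, LinearMap.add_apply]
        have e1 := hc (pg x) (ph y) (ph z)
        have e2 := hc (pg y) (ph z) (ph x)
        have e3 := hc (pg z) (ph x) (ph y)
        simp only [habelian _ _ (hph _) (hph _), map_zero, LinearMap.zero_apply] at e1 e2 e3
        linear_combination e1 + e2 + e3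
      · intro x y z
        simp only [hbg, hbh, map_add, LinearMap.add_apply]
        have e1 := hc (pg x) (pg y) (ph z)
        have e2 := hc (pg y) (pg z) (ph x)
        have e3 := hc (pg z) (pg x) (ph y)
        linear_combination e1 + e2 + e3
    · rintro ⟨hgg, hhh, hgh⟩ x y z
      have d1 := decomp ⁅x, y⁆ z
      have d2 := decomp ⁅y, z⁆ x
      have d3 := decomp ⁅z, x⁆ y
      linear_combination d1 + d2 + d3 + hgg x y z + hhh x y z + hgh x y z
  · intro _ x y
    exact decomp x y
end

section
/- Let λ ∈ ℂ and let α : ℤ → ℂ be a function satisfying α(−n) = −α(n) for all n ∈ ℤ and (m + (m+n)(1−m−n)λ·δ_{n,0})·α(m) − (n + (m+n)(1−m−n)λ·δ_{m,0})·α(n) = 0 for all n, m ∈ ℤ. Then α(n) = 0 for all n ∈ ℤ. (Consequently, the Lie algebra W_A(λ) with λ ∈ ℂ admits no nonzero abelian 2-cocycle of degree zero.) -/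
/-- the degree-zero abelian 2-cocycle condition on `W_A(λ)` for `λ ∈ ℂ`
forces the cocycle function to vanish. -/
theorem stmt_2 (lam : ℂ) (α : ℤ → ℂ)
    (hanti : ∀ n : ℤ, α (-n) = -α n)
    (heq : ∀ n m : ℤ,
      ((m : ℂ) + ((m : ℂ) + (n : ℂ)) * (1 - (m : ℂ) - (n : ℂ)) * lam *
          (if n = 0 then 1 else 0)) * α m
        - ((n : ℂ) + ((m : ℂ) + (n : ℂ)) * (1 - (m : ℂ) - (n : ℂ)) * lam *
          (if m = 0 then 1 else 0)) * α n = 0) :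
    ∀ n : ℤ, α n = 0 := by
  have h0 : α 0 = 0 := by
    have := hanti 0
    simp at this
    linear_combination (1/2 : ℂ) * this
  have h1 : α 1 = 0 := by
    have h := heq 0 1
    simp [h0] at h
    exact h
  intro n
  rcases eq_or_ne n 0 with rfl | hn
  · exact h0
  · have h := heq n 1
    rw [if_neg hn, if_neg one_ne_zero] at h
    have hnc : (n : ℂ) ≠ 0 := Int.cast_ne_zero.mpr hn
    have hn' : (n : ℂ) * α n = 0 := by linear_combination -h + h1
    rcases mul_eq_zero.mp hn' with h' | h'
    · exact absurd h' hnc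
    · exact h'
end

section
/- Let α : ℤ → ℂ be a function satisfying α(−n) = −α(n) for all n ∈ ℤ and (−n + (m+n)²·δ_{m,0})·α(n) − (−m + (m+n)²·δ_{n,0})·α(m) = 0 for all n, m ∈ ℤ. Then α(n) = 0 for all n ∈ ℤ. (Consequently, the Lie algebra W_A(∞) admits no nonzero abelian 2-cocycle of degree zero.) -/
/-- the degree-zero abelian 2-cocycle condition on `W_A(∞)`
forces the cocycle function to vanish. -/
theorem stmt_3 (α : ℤ → ℂ)
    (hanti : ∀ n : ℤ, α (-n) = -α n)
    (heq : ∀ n m : ℤ,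
      (-(n : ℂ) + ((m : ℂ) + (n : ℂ)) ^ 2 * (if m = 0 then 1 else 0)) * α n
        - (-(m : ℂ) + ((m : ℂ) + (n : ℂ)) ^ 2 * (if n = 0 then 1 else 0)) * α m = 0) :
    ∀ n : ℤ, α n = 0 := by
  have h0 : α 0 = 0 := by
    have h := hanti 0
    simp only [neg_zero] at h
    linear_combination h / 2
  -- key: for every n, (n^2 - n) * α n = 0
  have key : ∀ n : ℤ, ((n : ℂ) ^ 2 - n) * α n = 0 := by
    intro n
    have h := heq n 0
    simp only [Int.cast_zero, zero_add, if_pos rfl, if_true, mul_one, h0, mul_zero, neg_zero] at h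
    linear_combination h
  have h1 : α 1 = 0 := by
    have h2 : α 2 = 0 := by
      have := key 2
      have h4 : ((2 : ℂ) ^ 2 - 2) ≠ 0 := by norm_num
      exact (mul_eq_zero.mp this).resolve_left h4
    have h := heq 2 1
    simp only [if_neg (by norm_num : (2 : ℤ) ≠ 0), if_neg (by norm_num : (1 : ℤ) ≠ 0),
      mul_zero, add_zero, h2] at h
    push_cast at h
    linear_combination h
  intro n
  by_cases hn0 : n = 0
  · simp [hn0, h0]
  by_cases hn1 : n = 1
  · simp [hn1, h1]
  have hne : ((n : ℂ) ^ 2 - n) ≠ 0 := by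
    have hn : (n : ℂ) ≠ 0 := Int.cast_ne_zero.mpr hn0
    have h1' : (n : ℂ) - 1 ≠ 0 := by
      intro h
      apply hn1
      have : (n : ℂ) = 1 := by linear_combination h
      exact_mod_cast this
    have : (n : ℂ) ^ 2 - n = n * (n - 1) := by ring
    rw [this]
    exact mul_ne_zero hn h1'
  have := key n
  exact (mul_eq_zero.mp this).resolve_left hne
end

section
/- Let λ ∈ ℂ and define β_λ : ℤ → ℂ by β_λ(0) = λ + 1 and β_λ(n) = 1 for n ≠ 0. Then (−n + m(m+1)λ·δ_{n+m,0})·β_λ(n) − (−m + n(n+1)λ·δ_{n+m,0})·β_λ(m) + (n − m)·β_λ(n+m) = 0 for all n, m ∈ ℤ. Moreover, the constant function β_∞(n) = 1 satisfies (−n + m²·δ_{n+m,0})·β_∞(n) − (−m + n²·δ_{n+m,0})·β_∞(m) + (n − m)·β_∞(n+m) = 0 for all n, m ∈ ℤ. -/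
/-- the functions `β_λ` (for `λ ∈ ℂ`) and `β_∞` are degree-zero mixing
2-cocycle functions on `W_A(λ)` and `W_A(∞)` respectively. -/
theorem stmt_5 (lam : ℂ) :
    (∀ n m : ℤ,
      (-(n : ℂ) + (m : ℂ) * ((m : ℂ) + 1) * lam * (if n + m = 0 then 1 else 0)) *
          (if n = 0 then lam + 1 else 1)
        - (-(m : ℂ) + (n : ℂ) * ((n : ℂ) + 1) * lam * (if n + m = 0 then 1 else 0)) *
          (if m = 0 then lam + 1 else 1)
        + ((n : ℂ) - (m : ℂ)) * (if n + m = 0 then lam + 1 else 1) = 0) ∧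
    (∀ n m : ℤ,
      (-(n : ℂ) + (m : ℂ) ^ 2 * (if n + m = 0 then 1 else 0)) * 1
        - (-(m : ℂ) + (n : ℂ) ^ 2 * (if n + m = 0 then 1 else 0)) * 1
        + ((n : ℂ) - (m : ℂ)) * 1 = 0) := by
  constructor <;> intro n m
  · by_cases h : n + m = 0
    · have hm : (m : ℂ) = -(n : ℂ) := by
        have : m = -n := by omega
        simp [this]
      by_cases hn : n = 0
      · have hm0 : m = 0 := by omega
        simp [h, hn, hm0]
      · have hm0 : m ≠ 0 := by omega
        simp only [h, hn, hm0, if_true, if_false, if_pos]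
        rw [hm]; ring
    · by_cases hn : n = 0 <;> by_cases hm0 : m = 0 <;>
        simp [h, hn, hm0] <;> try ring
  · by_cases h : n + m = 0
    · have hm : (m : ℂ) = -(n : ℂ) := by
        have : m = -n := by omega
        simp [this]
      simp only [h, if_pos]
      rw [hm]; ring
    · simp [h]
end

section
/- Let λ ∈ ℂ with λ ≠ 0, and let β : ℤ → ℂ satisfy (−n + m(m+1)λ·δ_{n+m,0})·β(n) − (−m + n(n+1)λ·δ_{n+m,0})·β(m) + (n − m)·β(n+m) = 0 for all n, m ∈ ℤ. Then β = β(1)·β_λ, where β_λ(0) = λ + 1 and β_λ(n) = 1 for n ≠ 0; in particular the solution space is one-dimensional. Similarly, every β : ℤ → ℂ satisfying (−n + m²·δ_{n+m,0})·β(n) − (−m + n²·δ_{n+m,0})·β(m) + (n − m)·β(n+m) = 0 for all n, m ∈ ℤ is a constant function. -/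
/-- Helper: the cocycle recurrence away from the diagonal forces constancy away from 0. -/
lemma const_of_aux (β : ℤ → ℂ)
    (h : ∀ n m : ℤ, n + m ≠ 0 →
      -(n : ℂ) * β n + (m : ℂ) * β m + ((n : ℂ) - (m : ℂ)) * β (n + m) = 0)
    (h2 : β 2 = β 1) (hm1 : β (-1) = β 1) :
    ∀ n : ℤ, n ≠ 0 → β n = β 1 := by
  have pos2 : ∀ k : ℕ, β ((k : ℤ) + 2) = β 1 := by
    intro k
    induction k with
    | zero => simpa using h2
    | succ k ih =>
      have e : (((k + 1 : ℕ)) : ℤ) + 2 = (k : ℤ) + 3 := by push_cast; ring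
      rw [e]
      have hj := h ((k : ℤ) + 2) 1 (by omega)
      have e2 : ((k : ℤ) + 2) + 1 = (k : ℤ) + 3 := by ring
      rw [e2] at hj
      push_cast at hj
      have hne : ((k : ℂ) + 1) ≠ 0 := Nat.cast_add_one_ne_zero k
      apply mul_left_cancel₀ hne
      linear_combination hj + ((k : ℂ) + 2) * ih
  have neg : ∀ k : ℕ, β (-(k : ℤ) - 1) = β 1 := by
    intro k
    induction k with
    | zero => simpa using hm1
    | succ k ih =>
      have e : -(((k + 1 : ℕ)) : ℤ) - 1 = -(k : ℤ) - 2 := by push_cast; ring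
      rw [e]
      have hj := h (-(k : ℤ) - 2) 1 (by omega)
      have e2 : (-(k : ℤ) - 2) + 1 = -(k : ℤ) - 1 := by ring
      rw [e2] at hj
      push_cast at hj
      have hne : ((k : ℂ) + 2) ≠ 0 := by
        exact_mod_cast (Nat.cast_ne_zero (R := ℂ)).mpr (by omega : k + 2 ≠ 0)
      apply mul_left_cancel₀ hne
      linear_combination hj + ((k : ℂ) + 3) * ih
  intro n hn
  rcases lt_trichotomy n 0 with hlt | rfl | hgt
  · obtain ⟨k, hk⟩ : ∃ k : ℕ, n = -(k : ℤ) - 1 := ⟨(-n - 1).toNat, by omega⟩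
    rw [hk]; exact neg k
  · exact absurd rfl hn
  · by_cases h1 : n = 1
    · rw [h1]
    · obtain ⟨k, hk⟩ : ∃ k : ℕ, n = (k : ℤ) + 2 := ⟨(n - 2).toNat, by omega⟩
      rw [hk]; exact pos2 k

/-- for `λ ∈ ℂ \ {0}`, every degree-zero mixing 2-cocycle function on
`W_A(λ)` is a multiple of `β_λ`; and every degree-zero mixing 2-cocycle function on
`W_A(∞)` is constant. -/
theorem stmt_6 (lam : ℂ) (hlam : lam ≠ 0) (β : ℤ → ℂ)
    (heq : ∀ n m : ℤ,
      (-(n : ℂ) + (m : ℂ) * ((m : ℂ) + 1) * lam * (if n + m = 0 then 1 else 0)) * β n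
        - (-(m : ℂ) + (n : ℂ) * ((n : ℂ) + 1) * lam * (if n + m = 0 then 1 else 0)) * β m
        + ((n : ℂ) - (m : ℂ)) * β (n + m) = 0) :
    (∀ n : ℤ, β n = β 1 * (if n = 0 then lam + 1 else 1)) ∧
    (∀ γ : ℤ → ℂ,
      (∀ n m : ℤ,
        (-(n : ℂ) + (m : ℂ) ^ 2 * (if n + m = 0 then 1 else 0)) * γ n
          - (-(m : ℂ) + (n : ℂ) ^ 2 * (if n + m = 0 then 1 else 0)) * γ m
          + ((n : ℂ) - (m : ℂ)) * γ (n + m) = 0) →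
      ∀ n : ℤ, γ n = γ 0) := by
  constructor
  · -- β part
    have h' : ∀ n m : ℤ, n + m ≠ 0 →
        -(n : ℂ) * β n + (m : ℂ) * β m + ((n : ℂ) - (m : ℂ)) * β (n + m) = 0 := by
      intro n m hnm
      have := heq n m
      rw [if_neg hnm] at this
      linear_combination this
    have hB := h' 2 (-1) (by norm_num)
    have hC := h' 1 (-2) (by norm_num)
    have hD := heq 1 (-1)
    have hE := heq 2 (-2)
    norm_num at hB hC hD hE
    have hm1 : β (-1) = 3 * β 1 - 2 * β 2 := by linear_combination -hB
    have hm2 : β (-2) = 4 * β 1 - 3 * β 2 := by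
      linear_combination (-1/2) * hC + (3/2) * hm1
    have key : lam * β 2 = lam * β 1 := by
      linear_combination (1/12) * hE - (1/6) * hD - ((1 + 2*lam)/6) * hm1
        + ((2 + 6*lam)/12) * hm2
    have h2 : β 2 = β 1 := mul_left_cancel₀ hlam key
    have hm1' : β (-1) = β 1 := by rw [hm1, h2]; ring
    have h0 : β 0 = (lam + 1) * β 1 := by
      linear_combination (1/2) * hD + ((1 + 2*lam)/2) * hm1'
    have hall := const_of_aux β h' h2 hm1'
    intro n
    by_cases hn : n = 0
    · subst hn; rw [if_pos rfl, h0]; ring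
    · rw [if_neg hn, mul_one]; exact hall n hn
  · -- γ part
    intro γ hγ
    have h' : ∀ n m : ℤ, n + m ≠ 0 →
        -(n : ℂ) * γ n + (m : ℂ) * γ m + ((n : ℂ) - (m : ℂ)) * γ (n + m) = 0 := by
      intro n m hnm
      have := hγ n m
      rw [if_neg hnm] at this
      linear_combination this
    have hB := h' 2 (-1) (by norm_num)
    have hC := h' 1 (-2) (by norm_num)
    have hD := hγ 1 (-1)
    have hE := hγ 2 (-2)
    norm_num at hB hC hD hE
    have hm1 : γ (-1) = 3 * γ 1 - 2 * γ 2 := by linear_combination -hB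
    have hm2 : γ (-2) = 4 * γ 1 - 3 * γ 2 := by
      linear_combination (-1/2) * hC + (3/2) * hm1
    have h2 : γ 2 = γ 1 := by
      linear_combination (1/12) * hE - (1/6) * hD - (1/3) * hm1 + (1/2) * hm2
    have hm1' : γ (-1) = γ 1 := by rw [hm1, h2]; ring
    have h0 : γ 0 = γ 1 := by linear_combination (1/2) * hD + hm1'
    have hall := const_of_aux γ h' h2 hm1'
    intro n
    by_cases hn : n = 0
    · subst hn; rfl
    · rw [hall n hn, h0]
end

section
/- A function β : ℤ → ℂ satisfies (n + m)(β(m) − β(n)) + (n − m)·β(n + m) = 0 for all n, m ∈ ℤ if and only if there exist a, b ∈ ℂ such that β(n) = a·n² + b·n for all n ∈ ℤ. In particular, the space of solutions is two-dimensional, spanned by n ↦ n and n ↦ n². -/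
/-! Both `n ↦ n` and `n ↦ n²` solve the equation, and it is linear, so it suffices to show
that a solution `g` with `g 1 = g 2 = 0` vanishes. Taking `m = 1` gives
`(n - 1) g(n + 1) = (n + 1) g(n)`, which propagates the zeros to all `n ≥ 2`; since
`n ↦ g(-n)` is again a solution and `g(-1) = g(-2) = 0`, the same holds for negative `n`. -/

variable {K : Type*} [Field K]

def IsMixingCocycle (β : ℤ → K) : Prop :=
  ∀ n m : ℤ, ((n : K) + m) * (β m - β n) + ((n : K) - m) * β (n + m) = 0

namespace IsMixingCocycle

theorem quadratic (a b : K) : IsMixingCocycle fun n : ℤ => a * (n : K) ^ 2 + b * n := by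
  intro n m
  push_cast
  ring

theorem sub {β γ : ℤ → K} (hβ : IsMixingCocycle β) (hγ : IsMixingCocycle γ) :
    IsMixingCocycle (β - γ) := by
  intro n m
  simp only [Pi.sub_apply]
  linear_combination hβ n m - hγ n m

theorem comp_neg {β : ℤ → K} (hβ : IsMixingCocycle β) : IsMixingCocycle (β ∘ Neg.neg) := by
  intro n m
  have h := hβ (-n) (-m)
  simp only [Function.comp_apply, neg_add, Int.cast_neg] at h ⊢
  linear_combination -h

theorem apply_zero {g : ℤ → K} (hg : IsMixingCocycle g) : g 0 = 0 := by
  simpa using hg 1 0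

variable [CharZero K] {g : ℤ → K}

theorem apply_natCast_eq_zero (hg : IsMixingCocycle g) (h1 : g 1 = 0) (h2 : g 2 = 0) (n : ℕ) :
    g n = 0 := by
  obtain hn | hn := lt_or_ge n 2
  · interval_cases n
    · exact_mod_cast hg.apply_zero
    · exact_mod_cast h1
  induction n, hn using Nat.le_induction with
  | base => exact_mod_cast h2
  | succ n hn ih =>
    have step : ((n : K) - 1) * g (n + 1) = 0 := by
      simpa [h1, ih] using hg n 1
    have hn1 : (n : K) - 1 ≠ 0 := by
      rw [sub_ne_zero]
      exact_mod_cast (by omega : n ≠ 1)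
    exact_mod_cast (mul_eq_zero.mp step).resolve_left hn1

theorem eq_zero_of_apply_one_of_apply_two (hg : IsMixingCocycle g) (h1 : g 1 = 0)
    (h2 : g 2 = 0) : g = 0 := by
  have hm1 : g (-1) = 0 := by
    have := hg 2 (-1)
    norm_num [h1, h2] at this
    exact this
  have hm2 : g (-2) = 0 := by
    have := hg 1 (-2)
    norm_num [h1, hm1] at this
    exact this
  funext n
  obtain ⟨k, rfl | rfl⟩ := Int.eq_nat_or_neg n
  · exact hg.apply_natCast_eq_zero h1 h2 k
  · exact hg.comp_neg.apply_natCast_eq_zero hm1 hm2 k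

theorem exists_eq_quadratic {β : ℤ → K} (hβ : IsMixingCocycle β) :
    ∃ a b : K, ∀ n : ℤ, β n = a * (n : K) ^ 2 + b * n := by
  set a : K := β 2 / 2 - β 1
  set b : K := 2 * β 1 - β 2 / 2
  have hg := hβ.sub (quadratic a b)
  have h1 : (β - fun n : ℤ => a * (n : K) ^ 2 + b * n) 1 = 0 := by
    simp only [Pi.sub_apply, a, b]
    push_cast
    ring
  have h2 : (β - fun n : ℤ => a * (n : K) ^ 2 + b * n) 2 = 0 := by
    simp only [Pi.sub_apply, a, b]
    push_cast
    ring
  refine ⟨a, b, fun n => ?_⟩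
  exact sub_eq_zero.mp (congrFun (hg.eq_zero_of_apply_one_of_apply_two h1 h2) n)

end IsMixingCocycle

/-- degree-zero mixing 2-cocycle functions on `W_B(λ)` are exactly the
functions of the form `n ↦ a n² + b n`. -/
theorem stmt_7 (β : ℤ → ℂ) :
    (∀ n m : ℤ, ((n : ℂ) + (m : ℂ)) * (β m - β n) + ((n : ℂ) - (m : ℂ)) * β (n + m) = 0)
      ↔ ∃ a b : ℂ, ∀ n : ℤ, β n = a * (n : ℂ) ^ 2 + b * (n : ℂ) := by
  constructor
  · exact IsMixingCocycle.exists_eq_quadratic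
  · rintro ⟨a, b, hβ⟩
    obtain rfl : β = fun n : ℤ => a * (n : ℂ) ^ 2 + b * n := funext hβ
    exact IsMixingCocycle.quadratic a b
end

section
/- Let λ ∈ ℂ ∪ {∞} and let W_A(λ) be the Lie algebra defined below. Then the second Lie algebra cohomology HH²(W_A(λ)) of W_A(λ) with trivial coefficients ℂ has dimension 3 if λ = 0, and dimension 2 if λ ≠ 0. -/
set_option maxSynthPendingDepth 2

/-- The space of 2-cocycles of a complex Lie algebra with trivial coefficients:
alternating bilinear maps `Ω : L × L → ℂ` satisfying the cocycle identity. -/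
noncomputable def twoCocycles (L : Type) [LieRing L] [LieAlgebra ℂ L] :
    Submodule ℂ (L →ₗ[ℂ] L →ₗ[ℂ] ℂ) where
  carrier := {Ω | (∀ x : L, Ω x x = 0) ∧
    ∀ x y z : L, Ω ⁅x, y⁆ z + Ω ⁅y, z⁆ x + Ω ⁅z, x⁆ y = 0}
  add_mem' := by
    rintro a b ⟨ha1, ha2⟩ ⟨hb1, hb2⟩
    refine ⟨fun x => ?_, fun x y z => ?_⟩
    · simp [LinearMap.add_apply, ha1 x, hb1 x]
    · simp only [LinearMap.add_apply]
      linear_combination ha2 x y z + hb2 x y z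
  zero_mem' := by
    refine ⟨fun x => by simp, fun x y z => by simp⟩
  smul_mem' := by
    rintro c a ⟨ha1, ha2⟩
    refine ⟨fun x => ?_, fun x y z => ?_⟩
    · simp [LinearMap.smul_apply, ha1 x]
    · simp only [LinearMap.smul_apply, smul_eq_mul]
      linear_combination c * ha2 x y z

/-- The space of 2-coboundaries of a complex Lie algebra with trivial coefficients:
bilinear maps of the form `(x, y) ↦ ψ ⁅x, y⁆` for a linear functional `ψ`. -/
noncomputable def twoCoboundaries (L : Type) [LieRing L] [LieAlgebra ℂ L] :
    Submodule ℂ (L →ₗ[ℂ] L →ₗ[ℂ] ℂ) where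
  carrier := {Ω | ∃ ψ : L →ₗ[ℂ] ℂ, ∀ x y : L, Ω x y = ψ ⁅x, y⁆}
  add_mem' := by
    rintro a b ⟨ψ₁, h₁⟩ ⟨ψ₂, h₂⟩
    exact ⟨ψ₁ + ψ₂, fun x y => by simp [LinearMap.add_apply, h₁ x y, h₂ x y]⟩
  zero_mem' := ⟨0, fun x y => by simp⟩
  smul_mem' := by
    rintro c a ⟨ψ, h⟩
    exact ⟨c • ψ, fun x y => by simp [LinearMap.smul_apply, h x y]⟩

/-!
Since `ad L₀` acts on the basis by the weight, the cocycle identity for `(L₀, x, y)` gives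
`(wt x + wt y) Ω(x, y) = Ω(L₀, ⁅x, y⁆)`, so away from pairs of total weight zero every 2-cocycle
agrees with the coboundary of `x ↦ Ω(L₀, x) / wt x`. What remains are the diagonal values
`a n = Ω(L_n, L_{-n})` and `β n = Ω(L_n, A_{-n})` (the `A`–`A` part vanishes). The cocycle
identity makes `a` a combination of `n` and `n³ - n`, where `n` comes from a coboundary, and makes
`β` affine away from `0`, with `β 0` fixed by `β 1` and `β (-1)`; for `λ ≠ 0` the identity at
weight zero moreover forces `β (-1) = β 1`. Coboundaries have `a n = n a 1` and `β = 0`, so the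
class of `Ω` is detected by `a 2 - 2 a 1`, `β 1` and, for `λ = 0` only, `β (-1)`; explicit diagonal
cocycles realize all values.
-/

open Module

noncomputable def Module.Basis.constr₂ {ι R M P : Type*} [CommSemiring R] [AddCommMonoid M]
    [Module R M] [AddCommMonoid P] [Module R P] (b : Basis ι R M) (c : ι → ι → P) :
    M →ₗ[R] M →ₗ[R] P :=
  b.constr R fun i => b.constr R (c i)

@[simp]
lemma Module.Basis.constr₂_basis {ι R M P : Type*} [CommSemiring R] [AddCommMonoid M]
    [Module R M] [AddCommMonoid P] [Module R P] (b : Basis ι R M) (c : ι → ι → P) (i j : ι) :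
    b.constr₂ c (b i) (b j) = c i j := by
  simp [Module.Basis.constr₂]

section TwoCocycles

variable {L : Type} [LieRing L] [LieAlgebra ℂ L] {Ω : L →ₗ[ℂ] L →ₗ[ℂ] ℂ}

lemma apply_swap_of_mem_twoCocycles (hΩ : Ω ∈ twoCocycles L) (x y : L) : Ω y x = -Ω x y :=
  (LinearMap.IsAlt.neg hΩ.1 x y).symm

noncomputable def cyclicLieSum (Ω : L →ₗ[ℂ] L →ₗ[ℂ] ℂ) : L →ₗ[ℂ] L →ₗ[ℂ] L →ₗ[ℂ] ℂ :=
  let T := (LieAlgebra.ad ℂ L : L →ₗ[ℂ] Module.End ℂ L).compr₂ Ω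
  let rotate := fun S : L →ₗ[ℂ] L →ₗ[ℂ] L →ₗ[ℂ] ℂ => (LinearMap.lflip.comp S).flip
  T + rotate T + rotate (rotate T)

lemma cyclicLieSum_apply (x y z : L) :
    cyclicLieSum Ω x y z = Ω ⁅x, y⁆ z + Ω ⁅y, z⁆ x + Ω ⁅z, x⁆ y :=
  rfl

lemma cyclicLieSum_rotate (x y z : L) : cyclicLieSum Ω y z x = cyclicLieSum Ω x y z := by
  simp only [cyclicLieSum_apply]
  ring

lemma mem_twoCocycles_of_basis {ι : Type*} (b : Basis ι ℂ L)
    (hswap : ∀ i j, Ω (b j) (b i) = -Ω (b i) (b j))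
    (hcyc : ∀ i j k, cyclicLieSum Ω (b i) (b j) (b k) = 0) :
    Ω ∈ twoCocycles L := by
  have hflip : Ω = -Ω.flip := LinearMap.ext_basis b b fun i j => by
    rw [LinearMap.neg_apply, LinearMap.neg_apply, LinearMap.flip_apply, hswap]
  have hJ : cyclicLieSum Ω = 0 := b.ext fun i => LinearMap.ext_basis b b (hcyc i)
  exact ⟨LinearMap.isAlt_iff_eq_neg_flip.mpr hflip, fun x y z => by
    simpa [cyclicLieSum_apply] using LinearMap.congr_fun₂ (LinearMap.congr_fun hJ x) y z⟩

lemma mem_twoCocycles_of_basis_sum {ι κ : Type*} (b : Basis (ι ⊕ κ) ℂ L)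
    (hswap : ∀ i j, Ω (b j) (b i) = -Ω (b i) (b j))
    (hlll : ∀ i j k, cyclicLieSum Ω (b (.inl i)) (b (.inl j)) (b (.inl k)) = 0)
    (hllr : ∀ i j k, cyclicLieSum Ω (b (.inl i)) (b (.inl j)) (b (.inr k)) = 0)
    (hlrr : ∀ i j k, cyclicLieSum Ω (b (.inl i)) (b (.inr j)) (b (.inr k)) = 0)
    (hrrr : ∀ i j k, cyclicLieSum Ω (b (.inr i)) (b (.inr j)) (b (.inr k)) = 0) :
    Ω ∈ twoCocycles L := by
  refine mem_twoCocycles_of_basis b hswap ?_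
  rintro (i | i) (j | j) (k | k)
  · exact hlll i j k
  · exact hllr i j k
  · rw [cyclicLieSum_rotate]; exact hllr k i j
  · exact hlrr i j k
  · rw [← cyclicLieSum_rotate]; exact hllr j k i
  · rw [← cyclicLieSum_rotate]; exact hlrr j k i
  · rw [cyclicLieSum_rotate]; exact hlrr k i j
  · exact hrrr i j k

lemma finrank_quotient_twoCoboundaries {V : Type*} [AddCommGroup V] [Module ℂ V]
    (F : twoCocycles L →ₗ[ℂ] V) (hF : Function.Surjective F)
    (hker : ∀ Ω : twoCocycles L, F Ω = 0 ↔ (Ω : L →ₗ[ℂ] L →ₗ[ℂ] ℂ) ∈ twoCoboundaries L) :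
    finrank ℂ (twoCocycles L ⧸ (twoCoboundaries L).comap (twoCocycles L).subtype) =
      finrank ℂ V := by
  have : LinearMap.ker F = (twoCoboundaries L).comap (twoCocycles L).subtype := by
    ext Ω
    exact hker Ω
  rw [← this]
  exact (F.quotKerEquivOfSurjective hF).finrank_eq

end TwoCocycles

noncomputable def lieCoeff (lam : Option ℂ) (n m : ℤ) : ℂ :=
  n + m + if m = 0 then lamTerm lam n else 0

@[simp]
lemma lamTerm_zero (lam : Option ℂ) : lamTerm lam 0 = 0 := by
  cases lam <;> simp [lamTerm]

lemma lieCoeff_of_ne_zero (lam : Option ℂ) (n : ℤ) {m : ℤ} (hm : m ≠ 0) :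
    lieCoeff lam n m = n + m := by
  simp [lieCoeff, hm]

@[simp]
lemma lieCoeff_zero_right (lam : Option ℂ) (n : ℤ) : lieCoeff lam n 0 = n + lamTerm lam n := by
  simp [lieCoeff]

@[simp]
lemma lieCoeff_zero_left (lam : Option ℂ) (m : ℤ) : lieCoeff lam 0 m = m := by
  by_cases hm : m = 0 <;> simp [lieCoeff, hm]

@[simp]
lemma lieCoeff_neg_self (lam : Option ℂ) (n : ℤ) : lieCoeff lam n (-n) = 0 := by
  by_cases hn : n = 0 <;> simp [lieCoeff, hn]

structure IsLLCocycleSeq (a : ℤ → ℂ) : Prop where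
  neg : ∀ n, a (-n) = -a n
  cyclic : ∀ n m k : ℤ, n + m + k = 0 →
    ((m : ℂ) - n) * a (n + m) + ((k : ℂ) - m) * a (m + k) + ((n : ℂ) - k) * a (k + n) = 0

def IsLACocycleSeq (lam : Option ℂ) (β : ℤ → ℂ) : Prop :=
  ∀ n m k : ℤ, n + m + k = 0 →
    ((m : ℂ) - n) * β (n + m) - lieCoeff lam m k * β n + lieCoeff lam n k * β m = 0

namespace IsLLCocycleSeq

variable {a : ℤ → ℂ} (ha : IsLLCocycleSeq a)
include ha

lemma eq_of_one_le {n : ℤ} (hn : 1 ≤ n) :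
    a n = n * a 1 + ((n : ℂ) ^ 3 - n) / 6 * (a 2 - 2 * a 1) := by
  induction n, hn using Int.leInduction with
  | base => simp
  | succ n hn ih =>
    rcases hn.eq_or_lt with rfl | hn
    · norm_num
    · have h := ha.cyclic n 1 (-n - 1) (by ring)
      rw [show 1 + (-n - 1) = -n by ring, show -n - 1 + n = -1 by ring, ha.neg, ha.neg, ih] at h
      have h1n : (1 : ℂ) - n ≠ 0 := by
        rw [sub_ne_zero]; exact_mod_cast hn.ne
      apply mul_left_cancel₀ h1n
      push_cast at h ⊢
      linear_combination h

lemma eq (n : ℤ) : a n = n * a 1 + ((n : ℂ) ^ 3 - n) / 6 * (a 2 - 2 * a 1) := by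
  rcases lt_trichotomy n 0 with hn | rfl | hn
  · have h := ha.eq_of_one_le (n := -n) (by omega)
    rw [ha.neg] at h
    push_cast at h
    linear_combination -h
  · have h := ha.neg 0
    rw [neg_zero] at h
    norm_num
    linear_combination h / 2
  · exact ha.eq_of_one_le hn

lemma forall_eq_mul_iff : (∀ n : ℤ, a n = n * a 1) ↔ a 2 = 2 * a 1 := by
  refine ⟨fun h => by exact_mod_cast h 2, fun h n => ?_⟩
  rw [ha.eq n, h]
  ring

end IsLLCocycleSeq

lemma two_mul_eq_of_forall_rel {u : ℤ → ℂ}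
    (hu : ∀ n m : ℤ, n + m ≠ 0 → ((m : ℂ) - n) * u (n + m) + n * u n - m * u m = 0)
    {n : ℤ} (hn : 1 ≤ n) : 2 * u n = u 1 + u (-1) + n * (u 1 - u (-1)) := by
  induction n, hn using Int.leInduction with
  | base => push_cast; ring
  | succ n hn ih =>
    rcases hn.eq_or_lt with rfl | hn
    · have h := hu (-1) 2 (by norm_num)
      norm_num at h ⊢
      linear_combination -h
    · have h := hu n 1 (by omega)
      have h1n : (1 : ℂ) - n ≠ 0 := by
        rw [sub_ne_zero]; exact_mod_cast hn.ne
      apply mul_left_cancel₀ h1n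
      push_cast at h ⊢
      linear_combination 2 * h - n * ih

namespace IsLACocycleSeq

variable {lam : Option ℂ} {β : ℤ → ℂ} (hβ : IsLACocycleSeq lam β)
include hβ

lemma rel_of_add_ne_zero {n m : ℤ} (hnm : n + m ≠ 0) :
    ((m : ℂ) - n) * β (n + m) + n * β n - m * β m = 0 := by
  have h := hβ n m (-(n + m)) (by ring)
  rw [lieCoeff_of_ne_zero _ _ (neg_ne_zero.mpr hnm),
    lieCoeff_of_ne_zero _ _ (neg_ne_zero.mpr hnm)] at h
  push_cast at h
  linear_combination h

lemma two_mul_eq {n : ℤ} (hn : n ≠ 0) : 2 * β n = β 1 + β (-1) + n * (β 1 - β (-1)) := by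
  rcases hn.lt_or_gt with hn | hn
  · have h := two_mul_eq_of_forall_rel (u := fun n => β (-n)) (n := -n)
      (fun n m hnm => by
        have h := hβ.rel_of_add_ne_zero (n := -n) (m := -m) (by omega)
        rw [← neg_add] at h
        push_cast at h
        linear_combination -h) (by omega)
    simp only [neg_neg] at h
    push_cast at h
    linear_combination h
  · exact two_mul_eq_of_forall_rel (fun n m => hβ.rel_of_add_ne_zero) hn

lemma two_mul_zero :
    2 * β 0 = (1 - lamTerm lam (-1)) * β 1 + (1 + lamTerm lam 1) * β (-1) := by
  have h := hβ (-1) 1 0 (by norm_num)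
  norm_num at h
  linear_combination h

lemma forall_eq_zero_iff : (∀ n : ℤ, β n = 0) ↔ β 1 = 0 ∧ β (-1) = 0 := by
  refine ⟨fun h => ⟨h 1, h (-1)⟩, fun ⟨h1, hm1⟩ n => ?_⟩
  rcases eq_or_ne n 0 with rfl | hn
  · have h := hβ.two_mul_zero
    rw [h1, hm1] at h
    linear_combination h / 2
  · have h := hβ.two_mul_eq hn
    rw [h1, hm1] at h
    linear_combination h / 2

lemma neg_one_eq (hlam : lam ≠ some 0) : β (-1) = β 1 := by
  have h₁ := hβ (-1) 1 0 (by norm_num)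
  have h₂ := hβ (-2) 2 0 (by norm_num)
  have e2 := hβ.two_mul_eq (n := 2) (by norm_num)
  have em2 := hβ.two_mul_eq (n := -2) (by norm_num)
  norm_num at h₁ h₂ e2 em2
  rcases lam with _ | l
  · simp only [lamTerm] at h₁ h₂
    norm_num at h₁ h₂
    linear_combination -(h₂ - 2 * h₁ - e2 + 3 * em2) / 6
  · have hl : l ≠ 0 := fun h => hlam (by rw [h])
    simp only [lamTerm] at h₁ h₂
    norm_num at h₁ h₂
    have h : 6 * l * (β (-1) - β 1) = 0 := by
      linear_combination -(h₂ - 2 * h₁ - (l - 1) * e2 + (1 + 3 * l) * em2)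
    have := (mul_eq_zero.mp h).resolve_left (by simpa using hl)
    linear_combination this

end IsLACocycleSeq

lemma lamTerm_sub_lamTerm_neg (lam : Option ℂ) (n : ℤ) :
    lamTerm lam n - lamTerm lam (-n) = n * (lamTerm lam 1 - lamTerm lam (-1)) := by
  cases lam with
  | none => simp [lamTerm]
  | some l => simp [lamTerm]; ring

lemma isLLCocycleSeq_zero : IsLLCocycleSeq 0 :=
  ⟨by simp, by simp⟩

lemma isLACocycleSeq_zero (lam : Option ℂ) : IsLACocycleSeq lam 0 := by
  intro n m k _
  simp

lemma isLLCocycleSeq_cube : IsLLCocycleSeq fun n => (n : ℂ) ^ 3 - n where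
  neg n := by push_cast; ring
  cyclic n m k h := by
    obtain rfl : k = -n - m := by omega
    push_cast
    ring

lemma isLACocycleSeq_id : IsLACocycleSeq (some 0) fun n => (n : ℂ) := by
  intro n m k h
  obtain rfl : k = -n - m := by omega
  simp only [lieCoeff, lamTerm, mul_zero, ite_self, add_zero]
  push_cast
  ring

-- The value at `0` is the one forced by `IsLACocycleSeq.two_mul_zero` when `β 1 = β (-1) = 1`.
noncomputable def constLASeq (lam : Option ℂ) (n : ℤ) : ℂ :=
  if n = 0 then 1 + (lamTerm lam 1 - lamTerm lam (-1)) / 2 else 1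

lemma isLACocycleSeq_constLASeq (lam : Option ℂ) : IsLACocycleSeq lam (constLASeq lam) := by
  intro n m k h
  rcases eq_or_ne k 0 with rfl | hk
  · obtain rfl : m = -n := by omega
    rcases eq_or_ne n 0 with rfl | hn
    · simp
    · simp only [constLASeq, add_neg_cancel, if_true, if_neg hn, neg_eq_zero, lieCoeff_zero_right]
      push_cast
      linear_combination lamTerm_sub_lamTerm_neg lam n
  · rw [lieCoeff_of_ne_zero _ _ hk, lieCoeff_of_ne_zero _ _ hk]
    obtain rfl : k = -n - m := by omega
    simp only [constLASeq, if_neg (show n + m ≠ 0 by omega)]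
    push_cast
    split_ifs with hn hm hm
    · omega
    · subst hn; push_cast; ring
    · subst hm; push_cast; ring
    · ring

section WA

variable {L : Type} [LieRing L] [LieAlgebra ℂ L]

-- `b (.inl n)` and `b (.inr n)` play the roles of `L_n` and `A_n`.
structure IsWABasis (lam : Option ℂ) (b : Basis (ℤ ⊕ ℤ) ℂ L) : Prop where
  lie_inl_inl : ∀ n m : ℤ, ⁅b (.inl n), b (.inl m)⁆ = ((m : ℂ) - n) • b (.inl (n + m))
  lie_inl_inr : ∀ n m : ℤ, ⁅b (.inl n), b (.inr m)⁆ = lieCoeff lam n m • b (.inr (n + m))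
  lie_inr_inr : ∀ n m : ℤ, ⁅b (.inr n), b (.inr m)⁆ = 0

def weight : ℤ ⊕ ℤ → ℤ :=
  Sum.elim id id

noncomputable def diagLL (b : Basis (ℤ ⊕ ℤ) ℂ L) (n : ℤ) : (L →ₗ[ℂ] L →ₗ[ℂ] ℂ) →ₗ[ℂ] ℂ :=
  (LinearMap.applyₗ (b (.inl (-n)))).comp (LinearMap.applyₗ (b (.inl n)))

noncomputable def diagLA (b : Basis (ℤ ⊕ ℤ) ℂ L) (n : ℤ) : (L →ₗ[ℂ] L →ₗ[ℂ] ℂ) →ₗ[ℂ] ℂ :=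
  (LinearMap.applyₗ (b (.inr (-n)))).comp (LinearMap.applyₗ (b (.inl n)))

lemma diagLL_apply (b : Basis (ℤ ⊕ ℤ) ℂ L) (n : ℤ) (Ω : L →ₗ[ℂ] L →ₗ[ℂ] ℂ) :
    diagLL b n Ω = Ω (b (.inl n)) (b (.inl (-n))) :=
  rfl

lemma diagLA_apply (b : Basis (ℤ ⊕ ℤ) ℂ L) (n : ℤ) (Ω : L →ₗ[ℂ] L →ₗ[ℂ] ℂ) :
    diagLA b n Ω = Ω (b (.inl n)) (b (.inr (-n))) :=
  rfl

noncomputable def diagForm (b : Basis (ℤ ⊕ ℤ) ℂ L) (a β : ℤ → ℂ) : L →ₗ[ℂ] L →ₗ[ℂ] ℂ :=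
  b.constr₂ fun
    | .inl n, .inl m => if n + m = 0 then a n else 0
    | .inl n, .inr m => if n + m = 0 then β n else 0
    | .inr n, .inl m => if n + m = 0 then -β m else 0
    | .inr _, .inr _ => 0

@[simp]
lemma diagLL_diagForm (b : Basis (ℤ ⊕ ℤ) ℂ L) (a β : ℤ → ℂ) (n : ℤ) :
    diagLL b n (diagForm b a β) = a n := by
  simp [diagLL_apply, diagForm]

@[simp]
lemma diagLA_diagForm (b : Basis (ℤ ⊕ ℤ) ℂ L) (a β : ℤ → ℂ) (n : ℤ) :
    diagLA b n (diagForm b a β) = β n := by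
  simp [diagLA_apply, diagForm]

namespace IsWABasis

variable {lam : Option ℂ} {b : Basis (ℤ ⊕ ℤ) ℂ L} {Ω : L →ₗ[ℂ] L →ₗ[ℂ] ℂ}
  (hb : IsWABasis lam b)
include hb

lemma lie_inr_inl (n m : ℤ) :
    ⁅b (.inr n), b (.inl m)⁆ = -(lieCoeff lam m n • b (.inr (m + n))) := by
  rw [← lie_skew, hb.lie_inl_inr]

lemma lie_inl_zero (k : ℤ ⊕ ℤ) : ⁅b (.inl 0), b k⁆ = (weight k : ℂ) • b k := by
  rcases k with n | n <;> simp [hb.lie_inl_inl, hb.lie_inl_inr, weight]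

lemma exists_lie_eq_smul (i j : ℤ ⊕ ℤ) :
    ∃ (c : ℂ) (k : ℤ ⊕ ℤ), weight k = weight i + weight j ∧ ⁅b i, b j⁆ = c • b k := by
  rcases i with n | n <;> rcases j with m | m
  · exact ⟨_, .inl (n + m), rfl, hb.lie_inl_inl n m⟩
  · exact ⟨_, .inr (n + m), rfl, hb.lie_inl_inr n m⟩
  · exact ⟨_, .inr (m + n), add_comm _ _, by rw [hb.lie_inr_inl, ← neg_smul]⟩
  · exact ⟨0, .inr (n + m), rfl, by rw [hb.lie_inr_inr, zero_smul]⟩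

lemma diagForm_mem_twoCocycles {a β : ℤ → ℂ} (ha : IsLLCocycleSeq a)
    (hβ : IsLACocycleSeq lam β) : diagForm b a β ∈ twoCocycles L := by
  refine mem_twoCocycles_of_basis_sum b ?_ ?_ ?_ ?_ ?_
  · rintro (n | n) (m | m) <;> simp only [diagForm, Module.Basis.constr₂_basis]
    · split_ifs <;> try omega
      · obtain rfl : m = -n := by omega
        exact ha.neg n
      · simp
    all_goals first | simp | (split_ifs <;> first | omega | simp)
  · intro n m k
    simp only [cyclicLieSum_apply, hb.lie_inl_inl, map_smul, LinearMap.smul_apply, smul_eq_mul,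
      diagForm, Module.Basis.constr₂_basis]
    split_ifs with h₁ <;> try omega
    · exact ha.cyclic n m k h₁
    · simp
  · intro n m k
    simp only [cyclicLieSum_apply, hb.lie_inl_inl, hb.lie_inl_inr, hb.lie_inr_inl, map_smul,
      map_neg, LinearMap.smul_apply, LinearMap.neg_apply, smul_eq_mul, diagForm,
      Module.Basis.constr₂_basis]
    split_ifs with h₁ <;> try omega
    · linear_combination hβ n m k h₁
    · simp
  · intro n m k
    simp [cyclicLieSum_apply, hb.lie_inl_inr, hb.lie_inr_inl, hb.lie_inr_inr, diagForm]
  · intro n m k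
    simp [cyclicLieSum_apply, hb.lie_inr_inr]

lemma isLLCocycleSeq (hΩ : Ω ∈ twoCocycles L) : IsLLCocycleSeq fun n => diagLL b n Ω where
  neg n := by
    simp only [diagLL_apply, neg_neg]
    exact apply_swap_of_mem_twoCocycles hΩ _ _
  cyclic n m k h := by
    have hJ := hΩ.2 (b (.inl n)) (b (.inl m)) (b (.inl k))
    simp only [hb.lie_inl_inl, map_smul, LinearMap.smul_apply, smul_eq_mul] at hJ
    simp only [diagLL_apply]
    rw [show -(n + m) = k by omega, show -(m + k) = n by omega, show -(k + n) = m by omega]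
    exact hJ

lemma isLACocycleSeq (hΩ : Ω ∈ twoCocycles L) : IsLACocycleSeq lam fun n => diagLA b n Ω := by
  intro n m k h
  have hJ := hΩ.2 (b (.inl n)) (b (.inl m)) (b (.inr k))
  simp only [hb.lie_inl_inl, hb.lie_inl_inr, hb.lie_inr_inl, map_smul, map_neg,
    LinearMap.smul_apply, LinearMap.neg_apply, smul_eq_mul] at hJ
  rw [apply_swap_of_mem_twoCocycles hΩ (b (.inl n)),
    apply_swap_of_mem_twoCocycles hΩ (b (.inl m))] at hJ
  simp only [diagLA_apply]
  rw [show -(n + m) = k by omega, show -n = m + k by omega, show -m = n + k by omega]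
  linear_combination hJ

lemma weight_add_mul_apply (hΩ : Ω ∈ twoCocycles L) (i j : ℤ ⊕ ℤ) :
    ((weight i + weight j : ℤ) : ℂ) * Ω (b i) (b j) = Ω (b (.inl 0)) ⁅b i, b j⁆ := by
  have hJ := hΩ.2 (b (.inl 0)) (b i) (b j)
  rw [hb.lie_inl_zero, ← lie_skew (b j) (b (.inl 0)), hb.lie_inl_zero,
    apply_swap_of_mem_twoCocycles hΩ (b (.inl 0))] at hJ
  simp only [map_smul, map_neg, LinearMap.smul_apply, LinearMap.neg_apply, smul_eq_mul] at hJ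
  rw [apply_swap_of_mem_twoCocycles hΩ (b i) (b j)] at hJ
  push_cast
  linear_combination hJ

lemma apply_eq_constr_lie {f : ℤ ⊕ ℤ → ℂ}
    (hf : ∀ k, weight k ≠ 0 → f k = Ω (b (.inl 0)) (b k) / weight k)
    (hΩ : Ω ∈ twoCocycles L) {i j : ℤ ⊕ ℤ} (hij : weight i + weight j ≠ 0) :
    Ω (b i) (b j) = b.constr ℂ f ⁅b i, b j⁆ := by
  obtain ⟨c, k, hk, hlie⟩ := hb.exists_lie_eq_smul i j
  have h := hb.weight_add_mul_apply hΩ i j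
  rw [hlie, map_smul, smul_eq_mul, ← hk] at h
  have hk0 : (weight k : ℂ) ≠ 0 := by exact_mod_cast hk ▸ hij
  rw [hlie, map_smul, b.constr_basis, hf k (hk ▸ hij), smul_eq_mul]
  field_simp
  linear_combination h

lemma apply_inr_inr_eq_zero (hΩ : Ω ∈ twoCocycles L) (n m : ℤ) :
    Ω (b (.inr n)) (b (.inr m)) = 0 := by
  have hcyc (n m k : ℤ) := hΩ.2 (b (.inl n)) (b (.inr m)) (b (.inr k))
  simp only [hb.lie_inl_inr, hb.lie_inr_inr, hb.lie_inr_inl, map_smul, map_neg, map_zero,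
    LinearMap.smul_apply, LinearMap.neg_apply, LinearMap.zero_apply, smul_eq_mul] at hcyc
  -- `⁅L₁, A₀⁆ = 2 A₁` when `λ = ∞`, while `⁅L₋₁, A₀⁆ = -A₋₁` when `λ` is finite.
  have hone : Ω (b (.inr 1)) (b (.inr (-1))) = 0 := by
    rcases lam with _ | l
    · have h := hcyc 1 0 (-1)
      norm_num [lamTerm, hΩ.1] at h
      exact h
    · have h := hcyc (-1) 0 1
      norm_num [lamTerm, hΩ.1] at h
      rw [apply_swap_of_mem_twoCocycles hΩ (b (.inr (-1))), h, neg_zero]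
  by_cases hnm : n + m = 0
  · obtain rfl : m = -n := by omega
    rcases eq_or_ne n 0 with rfl | hn
    · exact hΩ.1 _
    · have h := hcyc (n - 1) 1 (-n)
      rw [lieCoeff_of_ne_zero _ _ one_ne_zero, lieCoeff_of_ne_zero _ _ (neg_ne_zero.mpr hn),
        show n - 1 + 1 = n by ring, show n - 1 + -n = -1 by ring,
        apply_swap_of_mem_twoCocycles hΩ (b (.inr 1)), hone] at h
      push_cast at h
      simpa [hn] using h
  · have h := hb.weight_add_mul_apply hΩ (.inr n) (.inr m)
    rw [hb.lie_inr_inr, map_zero, mul_eq_zero] at h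
    exact h.resolve_left (Int.cast_ne_zero.mpr (by simpa [weight] using hnm))

lemma diag_of_mem_twoCoboundaries (hΩ : Ω ∈ twoCoboundaries L) :
    (∀ n : ℤ, diagLL b n Ω = n * diagLL b 1 Ω) ∧ ∀ n : ℤ, diagLA b n Ω = 0 := by
  obtain ⟨ψ, hψ⟩ := hΩ
  refine ⟨fun n => ?_, fun n => ?_⟩
  · simp only [diagLL_apply, hψ, hb.lie_inl_inl, map_smul, smul_eq_mul, add_neg_cancel]
    push_cast
    ring
  · simp [diagLA_apply, hψ, hb.lie_inl_inr]

lemma mem_twoCoboundaries_of_diag (hΩ : Ω ∈ twoCocycles L)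
    (hLL : ∀ n : ℤ, diagLL b n Ω = n * diagLL b 1 Ω) (hLA : ∀ n : ℤ, diagLA b n Ω = 0) :
    Ω ∈ twoCoboundaries L := by
  -- `ψ L₀` is chosen so that `ψ ⁅L_n, L_{-n}⁆ = -2n ψ L₀` equals `a n = n a 1`.
  set f := Function.update (fun k => Ω (b (.inl 0)) (b k) / weight k) (.inl 0)
    (-diagLL b 1 Ω / 2)
  have hf (k : ℤ ⊕ ℤ) (hk : weight k ≠ 0) : f k = Ω (b (.inl 0)) (b k) / weight k :=
    Function.update_of_ne (by rintro rfl; exact hk rfl) _ _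
  have hf0 : f (.inl 0) = -diagLL b 1 Ω / 2 := Function.update_self _ _ _
  refine ⟨b.constr ℂ f, fun x y => ?_⟩
  suffices Ω = (LieAlgebra.ad ℂ L : L →ₗ[ℂ] Module.End ℂ L).compr₂ (b.constr ℂ f) by
    rw [this]
    rfl
  refine LinearMap.ext_basis b b fun i j => ?_
  change Ω (b i) (b j) = b.constr ℂ f ⁅b i, b j⁆
  by_cases hij : weight i + weight j = 0
  · rcases i with n | n <;> rcases j with m | m <;>
      obtain rfl : m = -n := by simp only [weight, Sum.elim_inl, Sum.elim_inr, id] at hij; omega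
    · have h := hLL n
      simp only [diagLL_apply] at h
      rw [h, hb.lie_inl_inl, map_smul, b.constr_basis, add_neg_cancel, hf0, diagLL_apply,
        smul_eq_mul]
      push_cast
      ring
    · rw [hb.lie_inl_inr, lieCoeff_neg_self, zero_smul, map_zero]
      exact hLA n
    · have h := hLA (-n)
      rw [diagLA_apply, neg_neg] at h
      rw [apply_swap_of_mem_twoCocycles hΩ, h, hb.lie_inr_inl,
        show lieCoeff lam (-n) n = 0 by simpa using lieCoeff_neg_self lam (-n)]
      simp
    · rw [hb.apply_inr_inr_eq_zero hΩ, hb.lie_inr_inr, map_zero]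
  · exact hb.apply_eq_constr_lie hf hΩ hij

lemma mem_twoCoboundaries_iff (hΩ : Ω ∈ twoCocycles L) :
    Ω ∈ twoCoboundaries L ↔
      diagLL b 2 Ω = 2 * diagLL b 1 Ω ∧ diagLA b 1 Ω = 0 ∧ diagLA b (-1) Ω = 0 := by
  rw [← (hb.isLLCocycleSeq hΩ).forall_eq_mul_iff, ← (hb.isLACocycleSeq hΩ).forall_eq_zero_iff]
  exact ⟨hb.diag_of_mem_twoCoboundaries, fun h => hb.mem_twoCoboundaries_of_diag hΩ h.1 h.2⟩

end IsWABasis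

variable {lam : Option ℂ} {b : Basis (ℤ ⊕ ℤ) ℂ L}

noncomputable def cocycleInvariants₃ (b : Basis (ℤ ⊕ ℤ) ℂ L) :
    twoCocycles L →ₗ[ℂ] ℂ × ℂ × ℂ :=
  ((diagLL b 2 - 2 • diagLL b 1).prod ((diagLA b 1).prod (diagLA b (-1)))).comp
    (twoCocycles L).subtype

noncomputable def cocycleInvariants₂ (b : Basis (ℤ ⊕ ℤ) ℂ L) : twoCocycles L →ₗ[ℂ] ℂ × ℂ :=
  ((diagLL b 2 - 2 • diagLL b 1).prod (diagLA b 1)).comp (twoCocycles L).subtype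

lemma cocycleInvariants₃_eq_zero_iff (hb : IsWABasis lam b) (Ω : twoCocycles L) :
    cocycleInvariants₃ b Ω = 0 ↔ (Ω : L →ₗ[ℂ] L →ₗ[ℂ] ℂ) ∈ twoCoboundaries L := by
  rw [hb.mem_twoCoboundaries_iff Ω.2]
  simp [cocycleInvariants₃, sub_eq_zero]

lemma cocycleInvariants₂_eq_zero_iff (hb : IsWABasis lam b) (hlam : lam ≠ some 0)
    (Ω : twoCocycles L) :
    cocycleInvariants₂ b Ω = 0 ↔ (Ω : L →ₗ[ℂ] L →ₗ[ℂ] ℂ) ∈ twoCoboundaries L := by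
  rw [hb.mem_twoCoboundaries_iff Ω.2, (hb.isLACocycleSeq Ω.2).neg_one_eq hlam]
  simp [cocycleInvariants₂, sub_eq_zero]

lemma cocycleInvariants₃_surjective (hb : IsWABasis (some 0) b) :
    Function.Surjective (cocycleInvariants₃ b) := by
  let V : twoCocycles L :=
    ⟨_, hb.diagForm_mem_twoCocycles isLLCocycleSeq_cube (isLACocycleSeq_zero _)⟩
  let C : twoCocycles L :=
    ⟨_, hb.diagForm_mem_twoCocycles isLLCocycleSeq_zero (isLACocycleSeq_constLASeq _)⟩
  let B : twoCocycles L :=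
    ⟨_, hb.diagForm_mem_twoCocycles isLLCocycleSeq_zero isLACocycleSeq_id⟩
  rintro ⟨x, y, z⟩
  refine ⟨(x / 6) • V + ((y + z) / 2) • C + ((y - z) / 2) • B, ?_⟩
  simp [cocycleInvariants₃, V, C, B, constLASeq]
  refine ⟨?_, ?_, ?_⟩ <;> ring

lemma cocycleInvariants₂_surjective (hb : IsWABasis lam b) :
    Function.Surjective (cocycleInvariants₂ b) := by
  let V : twoCocycles L :=
    ⟨_, hb.diagForm_mem_twoCocycles isLLCocycleSeq_cube (isLACocycleSeq_zero _)⟩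
  let C : twoCocycles L :=
    ⟨_, hb.diagForm_mem_twoCocycles isLLCocycleSeq_zero (isLACocycleSeq_constLASeq _)⟩
  rintro ⟨x, y⟩
  refine ⟨(x / 6) • V + y • C, ?_⟩
  norm_num [cocycleInvariants₂, V, C, constLASeq]

end WA

/-- the second Lie algebra cohomology of `W_A(λ)` with trivial coefficients
has dimension `3` if `λ = 0` and dimension `2` otherwise. -/
theorem stmt_8 (lam : Option ℂ) (L : Type) [LieRing L] [LieAlgebra ℂ L]
    (b : Module.Basis (ℤ ⊕ ℤ) ℂ L)
    (hLL : ∀ n m : ℤ,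
      ⁅b (Sum.inl n), b (Sum.inl m)⁆ = ((m : ℂ) - (n : ℂ)) • b (Sum.inl (n + m)))
    (hLA : ∀ n m : ℤ,
      ⁅b (Sum.inl n), b (Sum.inr m)⁆ =
        ((n : ℂ) + (m : ℂ) + (if m = 0 then lamTerm lam n else 0)) • b (Sum.inr (n + m)))
    (hAA : ∀ n m : ℤ, ⁅b (Sum.inr n), b (Sum.inr m)⁆ = 0) :
    Module.finrank ℂ
      (↥(twoCocycles L) ⧸ ((twoCoboundaries L).comap (twoCocycles L).subtype)) =
      if lam = some 0 then 3 else 2 := by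
  have hb : IsWABasis lam b := ⟨hLL, hLA, hAA⟩
  split_ifs with hlam
  · subst hlam
    rw [finrank_quotient_twoCoboundaries _ (cocycleInvariants₃_surjective hb)
      (cocycleInvariants₃_eq_zero_iff hb)]
    simp
  · rw [finrank_quotient_twoCoboundaries _ (cocycleInvariants₂_surjective hb)
      (cocycleInvariants₂_eq_zero_iff hb hlam)]
    simp
end

section
/- Let λ ∈ ℂ ∪ {∞}. Every Leibniz 2-cocycle χ : W_B(λ) × W_B(λ) → ℂ (a bilinear map satisfying χ([x,y],z) = χ(x,[y,z]) + χ([x,z],y) for all x, y, z) is alternating, i.e., χ(x,y) = −χ(y,x) for all x, y ∈ W_B(λ). -/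
/-!
The symmetric part `χ + χ.flip` of a Leibniz 2-cocycle is an invariant symmetric form, so it
suffices to show that `W_B(λ)` carries no nonzero invariant form. Pairings `(L_a, X_j)` with
`X ∈ {L, B}` vanish by `ad L_0`-weights unless `j = -a`; for `a ≠ 0` the remaining pairing is a
nonzero multiple of `Φ(L_a, [L_a, X_{-2a}]) = -Φ([L_a, L_a], X_{-2a}) = 0`, and for `a = 0` one
writes `L_0 = ½[L_{-1}, L_1]`. Pairings `(B_j, B_k)` vanish because every `B_j` lies in
`[L, B]` while `B` is abelian.
-/

open LinearMap (BilinForm)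

namespace LinearMap.BilinForm

variable {R L : Type*} [CommRing R] [LieRing L] [LieAlgebra R L]

theorem lieInvariant_add_flip (χ : BilinForm R L)
    (hχ : ∀ x y z : L, χ ⁅x, y⁆ z = χ x ⁅y, z⁆ + χ ⁅x, z⁆ y) :
    (χ + χ.flip).lieInvariant L := by
  intro x y z
  have h₁ := hχ z y x
  have h₂ := hχ y z x
  rw [← lie_skew y x, ← lie_skew z x] at h₁
  rw [← lie_skew y z, ← lie_skew z x, ← lie_skew y x] at h₂
  simp only [add_apply, flip_apply, map_neg, LinearMap.neg_apply] at h₁ h₂ ⊢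
  linear_combination h₁ + h₂

namespace lieInvariant

variable {Φ : BilinForm R L} (hΦ : Φ.lieInvariant L)
include hΦ

theorem apply_lie_self (x v : L) : Φ x ⁅x, v⁆ = 0 := by
  simpa [lie_self] using (hΦ x x v).symm

theorem apply_lie_eq_zero {w v : L} (hwv : ⁅w, v⁆ = 0) (x : L) : Φ ⁅x, w⁆ v = 0 := by
  rw [← lie_skew, map_neg, LinearMap.neg_apply, hΦ, hwv, map_zero, neg_zero, neg_zero]

end lieInvariant

end LinearMap.BilinForm

namespace LinearMap.BilinForm.lieInvariant

variable {K L : Type*} [Field K] [CharZero K] [LieRing L] [LieAlgebra K L]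
  {Φ : BilinForm K L} (hΦ : Φ.lieInvariant L)
include hΦ

theorem apply_witt_eq_zero {ℓ e : ℤ → L} {c : ℤ → ℤ → K}
    (hℓ : ∀ n m : ℤ, ⁅ℓ n, ℓ m⁆ = ((m : K) - n) • ℓ (n + m))
    (he : ∀ n m : ℤ, ⁅ℓ n, e m⁆ = c n m • e (n + m))
    (hc_zero : ∀ m : ℤ, c 0 m = m) (hc_ne_zero : ∀ a : ℤ, a ≠ 0 → c a (-2 * a) ≠ 0)
    (a j : ℤ) : Φ (ℓ a) (e j) = 0 := by
  have weight : ∀ a j : ℤ, a + j ≠ 0 → Φ (ℓ a) (e j) = 0 := by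
    intro a j hj
    have h := hΦ (ℓ 0) (ℓ a) (e j)
    rw [hℓ, he, hc_zero, zero_add, zero_add, map_smul, map_smul, LinearMap.smul_apply] at h
    have : ((a + j : ℤ) : K) * Φ (ℓ a) (e j) = 0 := by
      push_cast; simp only [smul_eq_mul] at h; linear_combination h
    exact (mul_eq_zero.mp this).resolve_left (by exact_mod_cast hj)
  have diagonal : ∀ a : ℤ, a ≠ 0 → Φ (ℓ a) (e (-a)) = 0 := by
    intro a ha
    have h := hΦ.apply_lie_self (ℓ a) (e (-2 * a))
    rw [he, map_smul, show a + -2 * a = -a by ring, smul_eq_mul] at h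
    exact (mul_eq_zero.mp h).resolve_left (hc_ne_zero a ha)
  have origin : Φ (ℓ 0) (e 0) = 0 := by
    have h := hΦ (ℓ (-1)) (ℓ 1) (e 0)
    rw [hℓ, he, map_smul, map_smul, LinearMap.smul_apply, smul_eq_mul, smul_eq_mul,
      show (-1 : ℤ) + 1 = 0 by norm_num, show (-1 : ℤ) + 0 = -1 by norm_num,
      show (-1 : ℤ) = -(1 : ℤ) by norm_num, diagonal 1 one_ne_zero] at h
    push_cast at h
    linear_combination h / 2
  rcases eq_or_ne (a + j) 0 with haj | haj
  · obtain rfl : j = -a := by omega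
    rcases eq_or_ne a 0 with rfl | ha
    · exact origin
    · exact diagonal a ha
  · exact weight a j haj

end LinearMap.BilinForm.lieInvariant

/-- The structure constants of `W_B(λ)`: `[L_n, B_m] = wbCoeff λ n m • B_{n+m}`. -/
def wbCoeff (lam : Option ℂ) (n m : ℤ) : ℂ :=
  (m : ℂ) - if n + m = 0 then lamTerm lam n else 0

theorem wbCoeff_zero_left (lam : Option ℂ) (m : ℤ) : wbCoeff lam 0 m = m := by
  rcases eq_or_ne m 0 with rfl | hm
  · cases lam <;> simp [wbCoeff, lamTerm]
  · simp [wbCoeff, hm]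

theorem wbCoeff_neg_two_mul_ne_zero (lam : Option ℂ) {a : ℤ} (ha : a ≠ 0) :
    wbCoeff lam a (-2 * a) ≠ 0 := by
  rw [wbCoeff, if_neg (by omega), sub_zero]
  exact_mod_cast (by omega : -2 * a ≠ 0)

theorem exists_wbCoeff_ne_zero (lam : Option ℂ) (j : ℤ) :
    ∃ a m : ℤ, a + m = j ∧ wbCoeff lam a m ≠ 0 := by
  rcases eq_or_ne j 0 with rfl | hj
  · cases lam with
    | some l => exact ⟨-1, 1, by norm_num, by norm_num [wbCoeff, lamTerm]⟩
    | none => exact ⟨1, -1, by norm_num, by norm_num [wbCoeff, lamTerm]⟩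
  · exact ⟨0, j, zero_add j, by rw [wbCoeff_zero_left]; exact_mod_cast hj⟩

/-- every Leibniz 2-cocycle on `W_B(λ)` with trivial coefficients is
alternating. -/
theorem stmt_12 (lam : Option ℂ) (L : Type) [LieRing L] [LieAlgebra ℂ L]
    (b : Module.Basis (ℤ ⊕ ℤ) ℂ L)
    (hLL : ∀ n m : ℤ,
      ⁅b (Sum.inl n), b (Sum.inl m)⁆ = ((m : ℂ) - (n : ℂ)) • b (Sum.inl (n + m)))
    (hLB : ∀ n m : ℤ,
      ⁅b (Sum.inl n), b (Sum.inr m)⁆ =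
        ((m : ℂ) - (if n + m = 0 then lamTerm lam n else 0)) • b (Sum.inr (n + m)))
    (hBB : ∀ n m : ℤ, ⁅b (Sum.inr n), b (Sum.inr m)⁆ = 0)
    (χ : L →ₗ[ℂ] L →ₗ[ℂ] ℂ)
    (hχ : ∀ x y z : L, χ ⁅x, y⁆ z = χ x ⁅y, z⁆ + χ ⁅x, z⁆ y) :
    ∀ x y : L, χ x y = -χ y x := by
  have hΦ := LinearMap.BilinForm.lieInvariant_add_flip χ hχ
  have hLL₀ : ∀ a k : ℤ, (χ + χ.flip) (b (.inl a)) (b (.inl k)) = 0 :=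
    hΦ.apply_witt_eq_zero hLL hLL (by simp) fun a ha => by
      rw [show ((-2 * a : ℤ) : ℂ) - a = ((-3 * a : ℤ) : ℂ) by push_cast; ring]
      exact_mod_cast (by omega : -3 * a ≠ 0)
  have hLB₀ : ∀ a m : ℤ, (χ + χ.flip) (b (.inl a)) (b (.inr m)) = 0 :=
    hΦ.apply_witt_eq_zero (c := wbCoeff lam) hLL hLB (wbCoeff_zero_left lam)
      fun a ha => wbCoeff_neg_two_mul_ne_zero lam ha
  have hBB₀ : ∀ j k : ℤ, (χ + χ.flip) (b (.inr j)) (b (.inr k)) = 0 := by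
    intro j k
    obtain ⟨a, m, rfl, hc⟩ := exists_wbCoeff_ne_zero lam j
    have h := hΦ.apply_lie_eq_zero (hBB m k) (b (.inl a))
    rw [hLB, map_smul, LinearMap.smul_apply, smul_eq_mul] at h
    exact (mul_eq_zero.mp h).resolve_left hc
  have hsymm : χ + χ.flip = 0 := by
    refine b.ext fun p => b.ext fun q => ?_
    rcases p with a | j <;> rcases q with k | k
    · exact hLL₀ a k
    · exact hLB₀ a k
    · simpa [add_comm] using hLB₀ k j
    · exact hBB₀ j k
  intro x y
  simpa [eq_neg_iff_add_eq_zero] using LinearMap.congr_fun₂ hsymm x y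
end

section
/- Let λ ∈ ℂ ∪ {∞}, let X denote either A or B, and let W_X(λ) be the Lie algebra defined below with basis {L_n, X_n : n ∈ ℤ}. For w ∈ W_X(λ), the adjoint map ad_w is locally nilpotent (i.e., for every y ∈ W_X(λ) there exists k ∈ ℕ with ad_w^k(y) = 0) if and only if w lies in the subspace spanned by {X_n : n ∈ ℤ}. -/
/-- Structure constant for the bracket `[L_n, A_m]` in `W_A(λ)`. -/
def omegaA (lam : Option ℂ) (n m : ℤ) : ℂ :=
  (n : ℂ) + (m : ℂ) + (if m = 0 then lamTerm lam n else 0)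

/-- Structure constant for the bracket `[L_n, B_m]` in `W_B(λ)`. -/
def omegaB (lam : Option ℂ) (n m : ℤ) : ℂ :=
  (m : ℂ) - (if n + m = 0 then lamTerm lam n else 0)

open Module Submodule Sum

theorem LieAlgebra.lie_mem_of_mem_span {R L : Type*} [CommRing R] [LieRing L] [LieAlgebra R L]
    {s t : Set L} {S : Submodule R L} (h : ∀ x ∈ s, ∀ y ∈ t, ⁅x, y⁆ ∈ S) {x y : L}
    (hx : x ∈ span R s) (hy : y ∈ span R t) : ⁅x, y⁆ ∈ S := by
  have hle : map₂ (LieModule.toEnd R L L : L →ₗ[R] L →ₗ[R] L) (span R s) (span R t) ≤ S := by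
    rw [map₂_span_span, span_le]
    rintro _ ⟨x, hx, y, hy, rfl⟩
    exact h x hx y hy
  exact hle (apply_mem_map₂ _ hx hy)

theorem Int.exists_forall_add_natCast_mul_ne (p : ℤ) : ∃ m : ℤ, ∀ k : ℕ, m + k * p ≠ p := by
  rcases le_or_gt 0 p with hp | hp
  · refine ⟨p + 1, fun k h => ?_⟩
    have := mul_nonneg k.cast_nonneg hp
    linarith
  · refine ⟨p - 1, fun k h => ?_⟩
    have := mul_nonpos_of_nonneg_of_nonpos k.cast_nonneg hp.le
    linarith

variable {K L : Type*} [Field K] [LieRing L] [LieAlgebra K L]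

/-- `b (inl n)` plays the role of `L_n` and `b (inr n)` that of `X_n`. -/
structure IsWittTypeBasis (b : Basis (ℤ ⊕ ℤ) K L) (ω : ℤ → ℤ → K) : Prop where
  lie_inl_inl : ∀ n m : ℤ, ⁅b (inl n), b (inl m)⁆ = ((m : K) - (n : K)) • b (inl (n + m))
  lie_inl_inr : ∀ n m : ℤ, ⁅b (inl n), b (inr m)⁆ = ω n m • b (inr (n + m))
  lie_inr_inr : ∀ n m : ℤ, ⁅b (inr n), b (inr m)⁆ = 0

def wittFiltration (b : Basis (ℤ ⊕ ℤ) K L) (M : ℤ) : Submodule K L :=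
  span K (b '' (Set.range inr ∪ inl '' Set.Ici M))

def HasLeadingCoeff (b : Basis (ℤ ⊕ ℤ) K L) (y : L) (M : ℤ) (c : K) : Prop :=
  y - c • b (inl M) ∈ wittFiltration b (M + 1)

variable {b : Basis (ℤ ⊕ ℤ) K L}

theorem mem_span_inr_iff {y : L} :
    y ∈ span K (Set.range fun n : ℤ => b (inr n)) ↔ ∀ n : ℤ, b.repr y (inl n) = 0 := by
  rw [Set.range_comp' b inr, b.mem_span_image]
  constructor
  · intro h n
    by_contra hn
    obtain ⟨_, hm⟩ := h (Finsupp.mem_support_iff.2 hn)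
    cases hm
  · rintro h (n | n) hn
    · exact absurd (h n) (Finsupp.mem_support_iff.1 hn)
    · exact ⟨n, rfl⟩

theorem mem_wittFiltration_iff {y : L} {M : ℤ} :
    y ∈ wittFiltration b M ↔ ∀ s < M, b.repr y (inl s) = 0 := by
  rw [wittFiltration, b.mem_span_image]
  constructor
  · intro h s hs
    by_contra hne
    rcases h (Finsupp.mem_support_iff.2 hne) with ⟨_, h'⟩ | ⟨n, hn, h'⟩
    · cases h'
    · cases h'
      exact absurd hn (not_le.2 hs)
  · rintro h (n | n) hn
    · exact Or.inr ⟨n, not_lt.1 fun hlt => Finsupp.mem_support_iff.1 hn (h n hlt), rfl⟩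
    · exact Or.inl ⟨n, rfl⟩

theorem basis_inr_mem_wittFiltration (n M : ℤ) : b (inr n) ∈ wittFiltration b M :=
  subset_span ⟨inr n, Or.inl ⟨n, rfl⟩, rfl⟩

theorem basis_inl_mem_wittFiltration {n M : ℤ} (h : M ≤ n) : b (inl n) ∈ wittFiltration b M :=
  subset_span ⟨inl n, Or.inr ⟨n, h, rfl⟩, rfl⟩

theorem wittFiltration_antitone : Antitone (wittFiltration b) := fun _ _ h =>
  span_mono (Set.image_mono (Set.union_subset_union_right _
    (Set.image_mono (Set.Ici_subset_Ici.2 h))))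

theorem exists_mem_wittFiltration_repr_ne_zero {w : L}
    (hw : w ∉ span K (Set.range fun n : ℤ => b (inr n))) :
    ∃ p : ℤ, w ∈ wittFiltration b p ∧ b.repr w (inl p) ≠ 0 := by
  rw [mem_span_inr_iff, not_forall] at hw
  have hfin : {n : ℤ | b.repr w (inl n) ≠ 0}.Finite :=
    (b.repr w).hasFiniteSupport.preimage inl_injective.injOn
  obtain ⟨B, hB⟩ := hfin.bddBelow
  obtain ⟨p, hp, hmin⟩ := Int.exists_least_of_bdd ⟨B, fun z hz => hB hz⟩ hw
  refine ⟨p, mem_wittFiltration_iff.2 fun s hs => ?_, hp⟩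
  by_contra h
  exact absurd (hmin s h) (not_le.2 hs)

namespace HasLeadingCoeff

theorem of_mem {y : L} {M : ℤ} (hy : y ∈ wittFiltration b M) :
    HasLeadingCoeff b y M (b.repr y (inl M)) := by
  rw [HasLeadingCoeff, mem_wittFiltration_iff]
  intro s hs
  rw [map_sub, map_smul, b.repr_self, Finsupp.sub_apply, Finsupp.smul_apply,
    Finsupp.single_apply]
  rcases (Int.lt_add_one_iff.1 hs).lt_or_eq with hlt | rfl
  · simp [mem_wittFiltration_iff.1 hy s hlt, hlt.ne']
  · simp

theorem basis (M : ℤ) : HasLeadingCoeff b (b (inl M)) M 1 := by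
  simp [HasLeadingCoeff]

theorem mem {y : L} {M : ℤ} {c : K} (h : HasLeadingCoeff b y M c) : y ∈ wittFiltration b M := by
  simpa using add_mem (wittFiltration_antitone (Int.le_add_one le_rfl) h)
    (smul_mem _ c (basis_inl_mem_wittFiltration (b := b) le_rfl))

theorem ne_zero {y : L} {M : ℤ} {c : K} (h : HasLeadingCoeff b y M c) (hc : c ≠ 0) : y ≠ 0 := by
  rintro rfl
  have := mem_wittFiltration_iff.1 h M (lt_add_one M)
  simp_all

end HasLeadingCoeff

namespace IsWittTypeBasis

variable {ω : ℤ → ℤ → K} (hb : IsWittTypeBasis b ω)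
include hb

theorem lie_mem_wittFiltration {x y : L} {p M : ℤ} (hx : x ∈ wittFiltration b p)
    (hy : y ∈ wittFiltration b M) : ⁅x, y⁆ ∈ wittFiltration b (p + M) := by
  refine LieAlgebra.lie_mem_of_mem_span ?_ hx hy
  rintro _ ⟨i, hi, rfl⟩ _ ⟨j, hj, rfl⟩
  rcases hi with ⟨n, rfl⟩ | ⟨n, hn, rfl⟩ <;> rcases hj with ⟨s, rfl⟩ | ⟨s, hs, rfl⟩
  · rw [hb.lie_inr_inr]
    exact zero_mem _
  · rw [← lie_skew, hb.lie_inl_inr]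
    exact neg_mem (smul_mem _ _ (basis_inr_mem_wittFiltration _ _))
  · rw [hb.lie_inl_inr]
    exact smul_mem _ _ (basis_inr_mem_wittFiltration _ _)
  · rw [hb.lie_inl_inl]
    exact smul_mem _ _ (basis_inl_mem_wittFiltration (add_le_add hn hs))

theorem hasLeadingCoeff_lie {x y : L} {p M : ℤ} {a c : K} (hx : HasLeadingCoeff b x p a)
    (hy : HasLeadingCoeff b y M c) :
    HasLeadingCoeff b ⁅x, y⁆ (p + M) (a * c * ((M : K) - p)) := by
  have hsplit : ⁅x, y⁆ - (a * c * ((M : K) - p)) • b (inl (p + M)) =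
      ⁅x - a • b (inl p), y⁆ + a • ⁅b (inl p), y - c • b (inl M)⁆ := by
    simp only [sub_lie, lie_sub, smul_lie, lie_smul, hb.lie_inl_inl]
    module
  rw [HasLeadingCoeff, hsplit]
  refine add_mem ?_ (smul_mem _ _ ?_)
  · simpa only [add_right_comm] using hb.lie_mem_wittFiltration hx hy.mem
  · simpa only [add_assoc] using
      hb.lie_mem_wittFiltration (basis_inl_mem_wittFiltration le_rfl) hy

theorem exists_forall_pow_ad_ne_zero [CharZero K] {w : L}
    (hw : w ∉ span K (Set.range fun n : ℤ => b (inr n))) :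
    ∃ y : L, ∀ k : ℕ, (LieAlgebra.ad K L w ^ k) y ≠ 0 := by
  obtain ⟨p, hwp, ha⟩ := exists_mem_wittFiltration_repr_ne_zero hw
  obtain ⟨m, hm⟩ := Int.exists_forall_add_natCast_mul_ne p
  have hlead : ∀ k : ℕ, ∃ c ≠ 0,
      HasLeadingCoeff b ((LieAlgebra.ad K L w ^ k) (b (inl m))) (m + k * p) c := by
    intro k
    induction k with
    | zero => exact ⟨1, one_ne_zero, by simpa using HasLeadingCoeff.basis m⟩
    | succ k ih =>
      obtain ⟨c, hc, hk⟩ := ih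
      have hcoeff : ((m + k * p : ℤ) : K) - p ≠ 0 := by
        rw [sub_ne_zero]
        exact_mod_cast hm k
      have := hb.hasLeadingCoeff_lie (HasLeadingCoeff.of_mem hwp) hk
      rw [show p + (m + k * p) = m + (k + 1 : ℕ) * p by push_cast; ring] at this
      rw [pow_succ', Module.End.mul_apply, LieAlgebra.ad_apply]
      exact ⟨_, mul_ne_zero (mul_ne_zero ha hc) hcoeff, this⟩
  refine ⟨b (inl m), fun k => ?_⟩
  obtain ⟨c, hc, hk⟩ := hlead k
  exact hk.ne_zero hc

theorem lie_lie_eq_zero_of_mem {w : L} (hw : w ∈ span K (Set.range fun n : ℤ => b (inr n)))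
    (y : L) : ⁅w, ⁅w, y⁆⁆ = 0 := by
  have hwy : ⁅w, y⁆ ∈ span K (Set.range fun n : ℤ => b (inr n)) := by
    refine LieAlgebra.lie_mem_of_mem_span ?_ hw (b.span_eq ▸ mem_top (x := y))
    rintro _ ⟨n, rfl⟩ _ ⟨s | s, rfl⟩
    · rw [← lie_skew, hb.lie_inl_inr]
      exact neg_mem (smul_mem _ _ (subset_span ⟨_, rfl⟩))
    · rw [hb.lie_inr_inr]
      exact zero_mem _
  refine (mem_bot K).1 (LieAlgebra.lie_mem_of_mem_span ?_ hw hwy)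
  rintro _ ⟨n, rfl⟩ _ ⟨s, rfl⟩
  rw [hb.lie_inr_inr]
  exact zero_mem _

end IsWittTypeBasis

theorem stmt_14_general (L : Type) [LieRing L] [LieAlgebra ℂ L]
    (b : Module.Basis (ℤ ⊕ ℤ) ℂ L) (ω : ℤ → ℤ → ℂ)
    (hLL : ∀ n m : ℤ,
      ⁅b (Sum.inl n), b (Sum.inl m)⁆ = ((m : ℂ) - (n : ℂ)) • b (Sum.inl (n + m)))
    (hLX : ∀ n m : ℤ, ⁅b (Sum.inl n), b (Sum.inr m)⁆ = ω n m • b (Sum.inr (n + m)))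
    (hXX : ∀ n m : ℤ, ⁅b (Sum.inr n), b (Sum.inr m)⁆ = 0) :
    ∀ w : L,
      (∀ y : L, ∃ k : ℕ, ((LieAlgebra.ad ℂ L w) ^ k) y = 0) ↔
        w ∈ Submodule.span ℂ (Set.range fun n : ℤ => b (Sum.inr n)) := by
  have hb : IsWittTypeBasis b ω := ⟨hLL, hLX, hXX⟩
  intro w
  constructor
  · intro hnil
    by_contra hw
    obtain ⟨y, hy⟩ := hb.exists_forall_pow_ad_ne_zero hw
    obtain ⟨k, hk⟩ := hnil y
    exact hy k hk
  · intro hw y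
    exact ⟨2, by simpa [pow_two] using hb.lie_lie_eq_zero_of_mem hw y⟩

/-- for `w ∈ W_X(λ)` (where `X = A` or `X = B`), the adjoint map `ad_w` is
locally nilpotent if and only if `w` lies in the span of `{X_n : n ∈ ℤ}`. -/
theorem stmt_14 (lam : Option ℂ) (L : Type) [LieRing L] [LieAlgebra ℂ L]
    (b : Module.Basis (ℤ ⊕ ℤ) ℂ L) (ω : ℤ → ℤ → ℂ)
    (hω : (∀ n m : ℤ, ω n m = omegaA lam n m) ∨ (∀ n m : ℤ, ω n m = omegaB lam n m))
    (hLL : ∀ n m : ℤ,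
      ⁅b (Sum.inl n), b (Sum.inl m)⁆ = ((m : ℂ) - (n : ℂ)) • b (Sum.inl (n + m)))
    (hLX : ∀ n m : ℤ, ⁅b (Sum.inl n), b (Sum.inr m)⁆ = ω n m • b (Sum.inr (n + m)))
    (hXX : ∀ n m : ℤ, ⁅b (Sum.inr n), b (Sum.inr m)⁆ = 0) :
    ∀ w : L,
      (∀ y : L, ∃ k : ℕ, ((LieAlgebra.ad ℂ L w) ^ k) y = 0) ↔
        w ∈ Submodule.span ℂ (Set.range fun n : ℤ => b (Sum.inr n)) :=
  stmt_14_general L b ω hLL hLX hXX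
end

section
/- Let λ ∈ ℂ ∪ {∞}, let X denote either A or B, and let σ be a Lie algebra automorphism of W_X(λ). Then σ maps the subspace spanned by {X_n : n ∈ ℤ} into itself, and there exist an inner automorphism ρ of W_X(λ) (a finite product of automorphisms exp(ad_w) = id + ad_w with w in the span of {X_n : n ∈ ℤ}), a sign ε ∈ {1, −1}, a scalar α ∈ ℂ \ {0}, complex numbers γ_n (n ∈ ℤ), and nonzero complex numbers ξ_n (n ∈ ℤ) such that (ρ ∘ σ)(L_n) = ε·αⁿ·L_{εn} + γ_n·X_{εn} and (ρ ∘ σ)(X_n) = ξ_n·X_{εn} for all n ∈ ℤ. Moreover, if X = A then γ_0 = 0. -/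
open Finsupp

section TwistedConv

variable {R : Type*} [CommRing R]

noncomputable def twistedConv (ω : ℤ → ℤ → R) : (ℤ →₀ R) →ₗ[R] (ℤ →₀ R) →ₗ[R] ℤ →₀ R :=
  Finsupp.lsum R fun i =>
    LinearMap.toSpanSingleton R _ (Finsupp.lsum R fun j => ω i j • Finsupp.lsingle (i + j))

variable (ω : ℤ → ℤ → R)

@[simp] lemma twistedConv_single (i j : ℤ) (a c : R) :
    twistedConv ω (single i a) (single j c) = single (i + j) (a * c * ω i j) := by
  simp only [twistedConv, lsum_single, LinearMap.toSpanSingleton_apply, LinearMap.smul_apply,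
    lsingle_apply, smul_single, smul_eq_mul]
  ring_nf

lemma twistedConv_apply (f g : ℤ →₀ R) (k : ℤ) :
    twistedConv ω f g k = f.sum fun i a => a * g (k - i) * ω i (k - i) := by
  simp only [twistedConv, lsum_apply, LinearMap.toSpanSingleton_apply, Finsupp.sum,
    LinearMap.sum_apply, LinearMap.smul_apply, finsetSum_apply, Finsupp.smul_apply,
    lsingle_apply, single_apply, smul_eq_mul]
  refine Finset.sum_congr rfl fun i _ => ?_
  rw [Finset.sum_eq_single (k - i)]
  · simp only [add_sub_cancel, if_true]
    ring
  · intro j _ hj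
    rw [if_neg (by omega)]
    ring
  · intro h
    simp [notMem_support_iff.mp h]

lemma twistedConv_apply_of_forall_ne {f g : ℤ →₀ R} {k : ℤ} (M : ℤ)
    (h : ∀ i ≠ M, f i = 0 ∨ g (k - i) = 0) :
    twistedConv ω f g k = f M * g (k - M) * ω M (k - M) := by
  rw [twistedConv_apply, Finsupp.sum, Finset.sum_eq_single M]
  · intro i _ hi
    rcases h i hi with h | h <;> simp [h]
  · intro hM
    simp [notMem_support_iff.mp hM]

lemma twistedConv_single_left_apply (s : ℤ) (a : R) (g : ℤ →₀ R) (k : ℤ) :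
    twistedConv ω (single s a) g k = a * g (k - s) * ω s (k - s) := by
  rw [twistedConv_apply_of_forall_ne ω s fun i hi => Or.inl (single_eq_of_ne hi), single_eq_same]

lemma twistedConv_single_right_apply (f : ℤ →₀ R) (s : ℤ) (a : R) (k : ℤ) :
    twistedConv ω f (single s a) k = f (k - s) * a * ω (k - s) s := by
  rw [twistedConv_apply_of_forall_ne ω (k - s) fun i hi => Or.inr (single_eq_of_ne (by omega)),
    sub_sub_cancel, single_eq_same]

end TwistedConv

lemma exists_top_of_ne_zero {α M : Type*} [LinearOrder α] [Zero M] {f : α →₀ M} (hf : f ≠ 0) :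
    ∃ N, f N ≠ 0 ∧ ∀ j, N < j → f j = 0 := by
  have hs := support_nonempty_iff.mpr hf
  refine ⟨f.support.max' hs, mem_support_iff.mp (f.support.max'_mem hs), fun j hj => ?_⟩
  exact notMem_support_iff.mp fun h => (f.support.le_max' j h).not_gt hj

lemma exists_bottom_of_ne_zero {α M : Type*} [LinearOrder α] [Zero M] {f : α →₀ M}
    (hf : f ≠ 0) :
    ∃ N, f N ≠ 0 ∧ ∀ j, j < N → f j = 0 := by
  have hs := support_nonempty_iff.mpr hf
  refine ⟨f.support.min' hs, mem_support_iff.mp (f.support.min'_mem hs), fun j hj => ?_⟩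
  exact notMem_support_iff.mp fun h => (f.support.min'_le j h).not_gt hj

lemma span_range_ne_top_of_forall_apply_eq_zero {R ι α : Type*} [Semiring R] [Nontrivial R]
    {y : ι → α →₀ R} (j : α) (h : ∀ n, y n j = 0) : Submodule.span R (Set.range y) ≠ ⊤ := by
  intro htop
  have hle : Submodule.span R (Set.range y) ≤ LinearMap.ker (lapply j) :=
    Submodule.span_le.mpr <| Set.range_subset_iff.mpr fun n => by simp [h n]
  have := hle (htop ▸ Submodule.mem_top : single j (1 : R) ∈ _)
  simp at this

lemma eq_zpow_of_map_add_of_ne {G : Type*} [GroupWithZero G] {f : ℤ → G}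
    (hf : ∀ n m, n ≠ m → f (n + m) = f n * f m) (h1 : f 1 ≠ 0) (n : ℤ) : f n = f 1 ^ n := by
  have h0 : f 0 = 1 := by
    have := hf 0 1 zero_ne_one
    rw [zero_add] at this
    exact (mul_eq_right₀ h1).mp this.symm
  have hneg : ∀ n, n ≠ 0 → f (-n) = (f n)⁻¹ := fun n hn =>
    (inv_eq_of_mul_eq_one_right (by rw [← hf n (-n) (by omega), add_neg_cancel, h0])).symm
  -- `hf` never applies to `1 + 1`, so `f 2` is reached through `4 + (-2)`
  have h2 : f 2 = f 1 ^ 2 := by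
    have h3 : f 3 = f 1 * f 2 := hf 1 2 (by norm_num)
    have h4 : f 4 = f 1 * f 3 := hf 1 3 (by norm_num)
    have h22 : f 2 * f (-2) = 1 := by rw [← hf 2 (-2) (by norm_num)]; exact h0
    calc f 2 = f 4 * f (-2) := by simpa using hf 4 (-2) (by norm_num)
      _ = f 1 ^ 2 * (f 2 * f (-2)) := by rw [h4, h3, sq]; simp only [mul_assoc]
      _ = f 1 ^ 2 := by rw [h22, mul_one]
  have hnat : ∀ k : ℕ, f k = f 1 ^ (k : ℤ) := by
    intro k
    induction k with
    | zero => simpa using h0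
    | succ k ih =>
      rcases eq_or_ne k 1 with rfl | hk
      · simpa using h2
      · rw [Nat.cast_succ, hf k 1 (by exact_mod_cast hk), ih, zpow_add_one₀ h1]
  obtain ⟨k, rfl | rfl⟩ := Int.eq_nat_or_neg n
  · exact hnat k
  · rcases eq_or_ne (k : ℤ) 0 with hk | hk
    · rw [hk, neg_zero, h0, zpow_zero]
    · rw [hneg _ hk, hnat, zpow_neg]

section Witt

variable {R : Type*} [CommRing R]

noncomputable def wittBracket : (ℤ →₀ R) →ₗ[R] (ℤ →₀ R) →ₗ[R] ℤ →₀ R :=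
  twistedConv fun i j => (j : R) - i

lemma wittBracket_apply_of_forall_ne {f g : ℤ →₀ R} {k : ℤ} (M : ℤ)
    (h : ∀ i ≠ M, f i = 0 ∨ g (k - i) = 0) :
    wittBracket f g k = f M * g (k - M) * (((k - M : ℤ) : R) - M) :=
  twistedConv_apply_of_forall_ne _ M h

variable {K : Type*} [Field K] [CharZero K]

lemma wittBracket_apply_eq_zero_of_top {x g : ℤ →₀ K} {c : K} {M : ℤ} (hM : 0 < M)
    (hxM : x M ≠ 0) (hx : ∀ i, M < i → x i = 0) (hg : wittBracket x g = c • g) :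
    ∀ j, M < j → g j = 0 := by
  rcases eq_or_ne g 0 with rfl | hg0
  · simp
  obtain ⟨N, hgN, hgtop⟩ := exists_top_of_ne_zero hg0
  have htop : wittBracket x g (M + N) = x M * g N * (N - M) := by
    rw [wittBracket_apply_of_forall_ne M fun i hi => ?_]
    · simp
    rcases lt_or_gt_of_ne hi with hi | hi
    · exact Or.inr (hgtop _ (by omega))
    · exact Or.inl (hx i hi)
  rw [hg, Finsupp.smul_apply, hgtop _ (by omega), smul_zero] at htop
  have hNM : (N : K) - M = 0 := by simpa [hxM, hgN] using htop.symm
  have : N = M := by exact_mod_cast sub_eq_zero.mp hNM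
  exact fun j hj => hgtop j (by omega)

lemma wittBracket_apply_eq_zero_of_bottom {x g : ℤ →₀ K} {c : K} {M : ℤ} (hM : M < 0)
    (hxM : x M ≠ 0) (hx : ∀ i, i < M → x i = 0) (hg : wittBracket x g = c • g) :
    ∀ j, j < M → g j = 0 := by
  rcases eq_or_ne g 0 with rfl | hg0
  · simp
  obtain ⟨N, hgN, hgbot⟩ := exists_bottom_of_ne_zero hg0
  have hbot : wittBracket x g (M + N) = x M * g N * (N - M) := by
    rw [wittBracket_apply_of_forall_ne M fun i hi => ?_]
    · simp
    rcases lt_or_gt_of_ne hi with hi | hi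
    · exact Or.inl (hx i hi)
    · exact Or.inr (hgbot _ (by omega))
  rw [hg, Finsupp.smul_apply, hgbot _ (by omega), smul_zero] at hbot
  have hNM : (N : K) - M = 0 := by simpa [hxM, hgN] using hbot.symm
  have : N = M := by exact_mod_cast sub_eq_zero.mp hNM
  exact fun j hj => hgbot j (by omega)

variable {y : ℤ → ℤ →₀ K}

lemma eq_single_zero_of_wittBracket_eq_smul (hne : ∀ n, y n ≠ 0)
    (heig : ∀ n, wittBracket (y 0) (y n) = (n : K) • y n)
    (hspan : Submodule.span K (Set.range y) = ⊤) : y 0 = single 0 (y 0 0) := by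
  obtain ⟨M, hxM, hx⟩ := exists_top_of_ne_zero (hne 0)
  obtain ⟨m, hxm, hx'⟩ := exists_bottom_of_ne_zero (hne 0)
  have hM : M ≤ 0 := by
    by_contra! hM
    exact span_range_ne_top_of_forall_apply_eq_zero (M + 1)
      (fun n => wittBracket_apply_eq_zero_of_top hM hxM hx (heig n) _ (by omega)) hspan
  have hm : 0 ≤ m := by
    by_contra! hm
    exact span_range_ne_top_of_forall_apply_eq_zero (m - 1)
      (fun n => wittBracket_apply_eq_zero_of_bottom hm hxm hx' (heig n) _ (by omega)) hspan
  ext i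
  rcases eq_or_ne i 0 with rfl | hi
  · simp
  rw [single_eq_of_ne hi]
  rcases lt_or_gt_of_ne hi with hi | hi
  · exact hx' i (by omega)
  · exact hx i (by omega)

lemma exists_sign_eq_single_of_eq_single_zero {c : K} (hy0 : y 0 = single 0 c)
    (hne : ∀ n, y n ≠ 0) (heig : ∀ n, wittBracket (y 0) (y n) = (n : K) • y n)
    (hspan : Submodule.span K (Set.range y) = ⊤) :
    ∃ (ε : ℤ) (a : ℤ → K), (ε = 1 ∨ ε = -1) ∧ ∀ n, y n = single (ε * n) (a n) := by
  have hck : ∀ n k, y n k ≠ 0 → c * k = n := by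
    intro n k hk
    have := DFunLike.congr_fun (heig n) k
    rw [hy0, wittBracket, twistedConv_single_left_apply, Finsupp.smul_apply, smul_eq_mul,
      sub_zero, Int.cast_zero, sub_zero] at this
    exact mul_right_cancel₀ hk (by linear_combination this)
  obtain ⟨d, hd⟩ := support_nonempty_iff.mpr (hne 1)
  have hcd : c * d = 1 := by exact_mod_cast hck 1 d (mem_support_iff.mp hd)
  have hkd : ∀ n k, y n k ≠ 0 → k = d * n := by
    intro n k hk
    have : c * k = c * (d * n : ℤ) := by
      push_cast
      linear_combination hck n k hk - n * hcd
    exact_mod_cast mul_left_cancel₀ (left_ne_zero_of_mul_eq_one hcd) this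
  refine ⟨d, fun n => y n (d * n), ?_, fun n => ?_⟩
  · by_contra hd1
    refine span_range_ne_top_of_forall_apply_eq_zero 1 (fun n => ?_) hspan
    by_contra h1
    exact hd1 (Int.eq_one_or_neg_one_of_mul_eq_one (hkd n 1 h1).symm)
  · ext k
    rcases eq_or_ne k (d * n) with rfl | hkn
    · simp
    · rw [single_eq_of_ne hkn]
      by_contra h
      exact hkn (hkd n k h)

theorem exists_eq_single_mul_zpow (hne : ∀ n, y n ≠ 0)
    (hbr : ∀ n m, wittBracket (y n) (y m) = ((m : K) - n) • y (n + m))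
    (hspan : Submodule.span K (Set.range y) = ⊤) :
    ∃ (ε : ℤ) (α : K), (ε = 1 ∨ ε = -1) ∧ α ≠ 0 ∧ ∀ n, y n = single (ε * n) (ε * α ^ n) := by
  have heig : ∀ n, wittBracket (y 0) (y n) = (n : K) • y n := fun n => by simpa using hbr 0 n
  obtain ⟨ε, a, hε, hy⟩ := exists_sign_eq_single_of_eq_single_zero
    (eq_single_zero_of_wittBracket_eq_smul hne heig hspan) hne heig hspan
  have hεε : (ε : K) * ε = 1 := by rcases hε with rfl | rfl <;> norm_num
  have hε0 : (ε : K) ≠ 0 := left_ne_zero_of_mul_eq_one hεε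
  have ha : ∀ n, a n ≠ 0 := fun n h => hne n (by rw [hy n, h, single_zero])
  have hmul : ∀ n m, n ≠ m → ε * a (n + m) = ε * a n * (ε * a m) := by
    intro n m hnm
    have := DFunLike.congr_fun (hbr n m) (ε * (n + m))
    rw [hy n, hy m, hy (n + m), wittBracket, twistedConv_single, ← mul_add, single_eq_same,
      Finsupp.smul_apply, single_eq_same, smul_eq_mul] at this
    have hmn : (m : K) - n ≠ 0 := sub_ne_zero.mpr (by exact_mod_cast hnm.symm)
    refine mul_left_cancel₀ hmn ?_
    push_cast at this
    linear_combination -ε * this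
  refine ⟨ε, ε * a 1, hε, mul_ne_zero hε0 (ha 1), fun n => ?_⟩
  rw [hy n, ← eq_zpow_of_map_add_of_ne (f := fun n => ε * a n) hmul (mul_ne_zero hε0 (ha 1)),
    ← mul_assoc, hεε, one_mul]

lemma exists_wittBracket_wittBracket_single_ne_zero {p : ℤ →₀ K} (hp : p ≠ 0) :
    ∃ k, wittBracket p (wittBracket p (single k 1)) ≠ 0 := by
  obtain ⟨M, hpM, hp⟩ := exists_top_of_ne_zero hp
  set k := |M| + 1
  have hMk : M < k := lt_of_le_of_lt (le_abs_self M) (lt_add_one _)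
  have hk0 : 0 < k := by positivity
  have hz : ∀ j, wittBracket p (single k 1) j = p (j - k) * (2 * k - j) := by
    intro j
    rw [wittBracket, twistedConv_single_right_apply]
    push_cast
    ring
  -- only `i = M` contributes to the coefficient at `2M + k`, which is `p M ^ 2 * (k - M) * k`
  refine ⟨k, fun h => ?_⟩
  have h2 := DFunLike.congr_fun h (2 * M + k)
  rw [Finsupp.zero_apply, wittBracket_apply_of_forall_ne M fun i hi => ?_] at h2
  · rw [hz, show 2 * M + k - M - k = M by ring] at h2
    have hkM : (k : K) - M ≠ 0 := sub_ne_zero.mpr (by exact_mod_cast (by omega : k ≠ M))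
    refine mul_ne_zero (mul_ne_zero (mul_ne_zero hpM hpM) hkM)
      (by exact_mod_cast hk0.ne' : (k : K) ≠ 0) ?_
    push_cast at h2
    linear_combination h2
  rcases lt_or_gt_of_ne hi with hi | hi
  · exact Or.inr (by rw [hz, hp _ (by omega), zero_mul])
  · exact Or.inl (hp i hi)

end Witt

def oneAddAd {R L : Type*} [CommRing R] [LieRing L] [LieAlgebra R L] (w : L)
    (hw : ∀ x y : L, ⁅⁅w, x⁆, ⁅w, y⁆⁆ = 0) : L →ₗ⁅R⁆ L where
  toLinearMap := 1 + LieAlgebra.ad R L w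
  map_lie' {x y} := by
    change ⁅x, y⁆ + ⁅w, ⁅x, y⁆⁆ = ⁅x + ⁅w, x⁆, y + ⁅w, y⁆⁆
    rw [leibniz_lie, lie_add, add_lie, add_lie, hw]
    abel

lemma oneAddAd_apply {R L : Type*} [CommRing R] [LieRing L] [LieAlgebra R L] (w : L)
    (hw : ∀ x y : L, ⁅⁅w, x⁆, ⁅w, y⁆⁆ = 0) (x : L) : oneAddAd (R := R) w hw x = x + ⁅w, x⁆ :=
  rfl

section Coordinates

variable {K L : Type*} [Field K] [LieRing L] [LieAlgebra K L] (b : Module.Basis (ℤ ⊕ ℤ) K L)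

noncomputable def coordL : L →ₗ[K] ℤ →₀ K :=
  lcomapDomain Sum.inl Sum.inl_injective ∘ₗ b.repr.toLinearMap

noncomputable def coordX : L →ₗ[K] ℤ →₀ K :=
  lcomapDomain Sum.inr Sum.inr_injective ∘ₗ b.repr.toLinearMap

@[simp] lemma coordL_apply (x : L) (k : ℤ) : coordL b x k = b.repr x (Sum.inl k) := rfl

@[simp] lemma coordX_apply (x : L) (k : ℤ) : coordX b x k = b.repr x (Sum.inr k) := rfl

@[simp] lemma coordL_inl (n : ℤ) : coordL b (b (Sum.inl n)) = single n 1 := by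
  ext k; simp [single_apply]

@[simp] lemma coordL_inr (n : ℤ) : coordL b (b (Sum.inr n)) = 0 := by
  ext k; simp

@[simp] lemma coordX_inl (n : ℤ) : coordX b (b (Sum.inl n)) = 0 := by
  ext k; simp

@[simp] lemma coordX_inr (n : ℤ) : coordX b (b (Sum.inr n)) = single n 1 := by
  ext k; simp [single_apply]

lemma ext_coord {x y : L} (hL : coordL b x = coordL b y) (hX : coordX b x = coordX b y) :
    x = y := by
  refine b.repr.injective (Finsupp.ext fun i => ?_)
  cases i with
  | inl k => exact DFunLike.congr_fun hL k
  | inr k => exact DFunLike.congr_fun hX k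

lemma span_range_inr_eq_ker_coordL :
    Submodule.span K (Set.range fun n : ℤ => b (Sum.inr n)) = LinearMap.ker (coordL b) := by
  ext x
  rw [← Function.comp_def b Sum.inr, Set.range_comp, b.mem_span_image, LinearMap.mem_ker]
  constructor
  · intro h
    ext k
    by_contra hk
    obtain ⟨j, hj⟩ := h (mem_support_iff.mpr hk)
    exact Sum.inr_ne_inl hj
  · rintro h (k | k) hk
    · exact absurd (DFunLike.congr_fun h k) (mem_support_iff.mp hk :)
    · exact ⟨k, rfl⟩

variable (ω : ℤ → ℤ → K)
  (hLL : ∀ n m : ℤ, ⁅b (Sum.inl n), b (Sum.inl m)⁆ = ((m : K) - n) • b (Sum.inl (n + m)))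
  (hLX : ∀ n m : ℤ, ⁅b (Sum.inl n), b (Sum.inr m)⁆ = ω n m • b (Sum.inr (n + m)))
  (hXX : ∀ n m : ℤ, ⁅b (Sum.inr n), b (Sum.inr m)⁆ = 0)
include hLL hLX hXX

lemma coordL_lie (x y : L) :
    coordL b ⁅x, y⁆ = wittBracket (coordL b x) (coordL b y) := by
  have h := LinearMap.ext_basis b b
    (B := (LieModule.toEnd K L L : L →ₗ[K] Module.End K L).compr₂ (coordL b))
    (B' := wittBracket.compl₁₂ (coordL b) (coordL b)) ?_
  · exact DFunLike.congr_fun (DFunLike.congr_fun h x) y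
  rintro (n | n) (m | m)
  · simp [hLL, wittBracket, smul_single]
  · simp [hLX]
  · simp only [LinearMap.compr₂_apply, LieHom.coe_toLinearMap, LieModule.toEnd_apply_apply]
    rw [← lie_skew, hLX]
    simp
  · simp [hXX]

lemma coordX_lie (x y : L) :
    coordX b ⁅x, y⁆ = twistedConv ω (coordL b x) (coordX b y)
      - twistedConv ω (coordL b y) (coordX b x) := by
  have h := LinearMap.ext_basis b b
    (B := (LieModule.toEnd K L L : L →ₗ[K] Module.End K L).compr₂ (coordX b)
      + ((twistedConv ω).compl₁₂ (coordL b) (coordX b)).flip)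
    (B' := (twistedConv ω).compl₁₂ (coordL b) (coordX b)) ?_
  · exact eq_sub_of_add_eq (DFunLike.congr_fun (DFunLike.congr_fun h x) y)
  rintro (n | n) (m | m)
  · simp [hLL]
  · simp [hLX, smul_single]
  · simp only [LinearMap.add_apply, LinearMap.compr₂_apply, LieHom.coe_toLinearMap,
      LieModule.toEnd_apply_apply]
    rw [← lie_skew, hLX]
    simp [smul_single]
  · simp [hXX]

lemma coordL_lie_eq_zero_of_left {x : L} (hx : coordL b x = 0) (y : L) :
    coordL b ⁅x, y⁆ = 0 := by
  rw [coordL_lie b ω hLL hLX hXX, hx, map_zero, LinearMap.zero_apply]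

lemma lie_eq_zero_of_coordL_eq_zero {x y : L} (hx : coordL b x = 0) (hy : coordL b y = 0) :
    ⁅x, y⁆ = 0 :=
  ext_coord b (by simp [coordL_lie b ω hLL hLX hXX, hx])
    (by simp [coordX_lie b ω hLL hLX hXX, hx, hy])

lemma coordL_eq_zero_iff_forall_lie_lie [CharZero K] (x : L) :
    coordL b x = 0 ↔ ∀ y : L, ⁅x, ⁅x, y⁆⁆ = 0 := by
  refine ⟨fun hx y => lie_eq_zero_of_coordL_eq_zero b ω hLL hLX hXX hx
    (coordL_lie_eq_zero_of_left b ω hLL hLX hXX hx y), fun h => ?_⟩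
  by_contra hx
  obtain ⟨k, hk⟩ := exists_wittBracket_wittBracket_single_ne_zero hx
  apply hk
  rw [← coordL_inl b k, ← coordL_lie b ω hLL hLX hXX, ← coordL_lie b ω hLL hLX hXX, h, map_zero]

lemma coordL_lieEquiv_apply_eq_zero [CharZero K] (σ : L ≃ₗ⁅K⁆ L) {x : L} (hx : coordL b x = 0) :
    coordL b (σ x) = 0 := by
  rw [coordL_eq_zero_iff_forall_lie_lie b ω hLL hLX hXX] at hx ⊢
  intro y
  rw [← σ.apply_symm_apply y, ← σ.map_lie, ← σ.map_lie, hx, map_zero]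

lemma exists_coordL_lieEquiv_inl_eq [CharZero K] (σ : L ≃ₗ⁅K⁆ L) :
    ∃ (ε : ℤ) (α : K), (ε = 1 ∨ ε = -1) ∧ α ≠ 0 ∧
      ∀ n, coordL b (σ (b (Sum.inl n))) = single (ε * n) (ε * α ^ n) := by
  refine exists_eq_single_mul_zpow (fun n h => ?_) (fun n m => ?_) ?_
  · have := coordL_lieEquiv_apply_eq_zero b ω hLL hLX hXX σ.symm h
    simp at this
  · rw [← coordL_lie b ω hLL hLX hXX, ← σ.map_lie, hLL, map_smul, map_smul]
  · have hσ : ∀ v : L, coordL b (σ v) ∈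
        Submodule.span K (Set.range fun n => coordL b (σ (b (Sum.inl n)))) := by
      suffices ⊤ ≤ (Submodule.span K (Set.range fun n => coordL b (σ (b (Sum.inl n))))).comap
          (coordL b ∘ₗ (σ : L →ₗ[K] L)) from fun v => this Submodule.mem_top
      rw [← b.span_eq, Submodule.span_le]
      rintro _ ⟨i | i, rfl⟩
      · exact Submodule.subset_span ⟨i, rfl⟩
      · simp [coordL_lieEquiv_apply_eq_zero b ω hLL hLX hXX σ (coordL_inr b i)]
    rw [eq_top_iff, ← (Finsupp.basisSingleOne (R := K) (ι := ℤ)).span_eq, Submodule.span_le]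
    rintro _ ⟨j, rfl⟩
    simpa using hσ (σ.symm (b (Sum.inl j)))

variable (hω0 : ∀ k, ω 0 k = k)
include hω0

lemma exists_oneAddAd_apply_eq [CharZero K] {u : L} {c : K} (hc : c ≠ 0)
    (hu : coordL b u = single 0 c) :
    ∃ (w : L) (hw : ∀ x y : L, ⁅⁅w, x⁆, ⁅w, y⁆⁆ = 0), coordL b w = 0 ∧
      oneAddAd (R := K) w hw u = c • b (Sum.inl 0) + coordX b u 0 • b (Sum.inr 0) := by
  set q := coordX b u
  -- `w = ∑ q k / (c k) • X_k`, so that `⁅u, w⁆` is the `X_k`-part of `u` for `k ≠ 0`;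
  -- the term `k = 0` vanishes because division by `c * 0 = 0` gives `0`
  let g : ℤ →₀ K := onFinset q.support (fun k => q k / (c * k))
    fun k hk => mem_support_iff.mpr fun h => hk (by simp [h])
  let w := b.repr.symm (sumElim 0 g)
  have hwL : coordL b w = 0 := by ext k; simp [w, sumElim_inl]
  have hwX : coordX b w = g := by ext k; simp [w, sumElim_inr]
  have hw (x y : L) : ⁅⁅w, x⁆, ⁅w, y⁆⁆ = 0 := lie_eq_zero_of_coordL_eq_zero b ω hLL hLX hXX
    (coordL_lie_eq_zero_of_left b ω hLL hLX hXX hwL x)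
    (coordL_lie_eq_zero_of_left b ω hLL hLX hXX hwL y)
  refine ⟨w, hw, hwL, ext_coord b ?_ ?_⟩
  · simp [oneAddAd_apply, coordL_lie_eq_zero_of_left b ω hLL hLX hXX hwL, hu, smul_single]
  ext k
  simp only [oneAddAd_apply, map_add, coordX_lie b ω hLL hLX hXX, hwL, hu, hwX, map_zero,
    LinearMap.zero_apply, zero_sub, map_smul, coordX_inl, coordX_inr, smul_zero, zero_add,
    Finsupp.add_apply, Finsupp.neg_apply, Finsupp.smul_apply, twistedConv_single_left_apply,
    sub_zero, hω0, g, onFinset_apply, smul_eq_mul]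
  rcases eq_or_ne k 0 with rfl | hk
  · simp [q]
  · have : (k : K) ≠ 0 := by exact_mod_cast hk
    rw [single_eq_of_ne hk]
    field_simp
    ring

lemma eq_smul_add_smul_of_lie_eq_smul [CharZero K] {c γ a : K} {s : ℤ} {v : L} (hc : c ≠ 0)
    (hv : coordL b v = single s a)
    (huv : ⁅c • b (Sum.inl 0) + γ • b (Sum.inr 0), v⁆ = (c * s) • v) :
    v = a • b (Sum.inl s) + coordX b v s • b (Sum.inr s) ∧ a * γ * ω s 0 = 0 := by
  have key : ∀ k, c * (k - s) * coordX b v k = single s (a * γ * ω s 0) k := by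
    intro k
    have := DFunLike.congr_fun (congrArg (coordX b) huv) k
    simp only [coordX_lie b ω hLL hLX hXX, hv, map_add, map_smul, coordL_inl, coordL_inr,
      coordX_inl, coordX_inr, smul_zero, add_zero, zero_add, smul_single, smul_eq_mul, mul_one,
      twistedConv_single, Finsupp.sub_apply, Finsupp.smul_apply,
      twistedConv_single_left_apply, sub_zero, hω0] at this
    linear_combination this
  refine ⟨ext_coord b (by simp [hv, smul_single]) ?_, by simpa using (key s).symm⟩
  ext k
  rcases eq_or_ne k s with rfl | hk
  · simp
  · have hks : (k : K) - s ≠ 0 := sub_ne_zero.mpr (by exact_mod_cast hk)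
    have := key k
    rw [single_eq_of_ne hk] at this
    simpa [single_eq_of_ne hk, hc, hks] using this

lemma normal_form_of_map_inl_zero_eq [CharZero K] (τ : L →ₗ⁅K⁆ L) {ε : ℤ}
    (hε : ε = 1 ∨ ε = -1) {α γ₀ : K} (hα : α ≠ 0)
    (h0 : τ (b (Sum.inl 0)) = (ε : K) • b (Sum.inl 0) + γ₀ • b (Sum.inr 0))
    (hL : ∀ n, coordL b (τ (b (Sum.inl n))) = single (ε * n) (ε * α ^ n))
    (hX : ∀ n, coordL b (τ (b (Sum.inr n))) = 0) :
    (∀ n, τ (b (Sum.inl n)) = ((ε : K) * α ^ n) • b (Sum.inl (ε * n))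
      + coordX b (τ (b (Sum.inl n))) (ε * n) • b (Sum.inr (ε * n))) ∧
    (∀ n, τ (b (Sum.inr n)) = coordX b (τ (b (Sum.inr n))) (ε * n) • b (Sum.inr (ε * n))) ∧
    ∀ m, γ₀ * ω m 0 = 0 := by
  have hεε : (ε : K) * ε = 1 := by rcases hε with rfl | rfl <;> norm_num
  have hε0 : (ε : K) ≠ 0 := left_ne_zero_of_mul_eq_one hεε
  have hεεn : ∀ n, ε * (ε * n) = n := fun n => by rcases hε with rfl | rfl <;> ring
  have hcast : ∀ n, (ε : K) * ((ε * n : ℤ) : K) = n := fun n => by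
    push_cast
    linear_combination (n : K) * hεε
  have hLn n := eq_smul_add_smul_of_lie_eq_smul b ω hLL hLX hXX hω0 hε0 (hL n)
    (by rw [← h0, ← τ.map_lie, hLL, map_smul, hcast, zero_add, Int.cast_zero, sub_zero])
  have hXn n := eq_smul_add_smul_of_lie_eq_smul b ω hLL hLX hXX hω0 hε0 (a := 0) (s := ε * n)
    (by rw [hX n, single_zero])
    (by rw [← h0, ← τ.map_lie, hLX, hω0, map_smul, hcast, zero_add])
  refine ⟨fun n => (hLn n).1, fun n => by simpa using (hXn n).1, fun m => ?_⟩
  have h := (hLn (ε * m)).2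
  rw [hεεn, mul_assoc] at h
  exact (mul_eq_zero.mp h).resolve_left (mul_ne_zero hε0 (zpow_ne_zero _ hα))

end Coordinates

lemma eq_zero_of_forall_mul_omegaA_eq_zero {lam : Option ℂ} {γ : ℂ}
    (h : ∀ m, γ * omegaA lam m 0 = 0) : γ = 0 := by
  have h1 := h 1
  have h2 := h 2
  cases lam with
  | none =>
    norm_num [omegaA, lamTerm] at h1
    exact h1
  | some l =>
    simp only [omegaA, lamTerm, if_true] at h1 h2
    push_cast at h1 h2
    linear_combination 3 * h1 - h2

/-- every Lie algebra automorphism `σ` of `W_X(λ)` preserves the abelian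
ideal spanned by the `X_n`, and after composing with a suitable inner automorphism `ρ` (a
finite product of maps `exp(ad_w) = id + ad_w` with `w` in the span of the `X_n`) it takes
the normal form `(ρ ∘ σ)(L_n) = ε αⁿ L_{εn} + γ_n X_{εn}`, `(ρ ∘ σ)(X_n) = ξ_n X_{εn}`,
with `γ_0 = 0` in the case `X = A`. -/
theorem stmt_15 (lam : Option ℂ) (L : Type) [LieRing L] [LieAlgebra ℂ L]
    (b : Module.Basis (ℤ ⊕ ℤ) ℂ L) (ω : ℤ → ℤ → ℂ)
    (hω : (∀ n m : ℤ, ω n m = omegaA lam n m) ∨ (∀ n m : ℤ, ω n m = omegaB lam n m))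
    (hLL : ∀ n m : ℤ,
      ⁅b (Sum.inl n), b (Sum.inl m)⁆ = ((m : ℂ) - (n : ℂ)) • b (Sum.inl (n + m)))
    (hLX : ∀ n m : ℤ, ⁅b (Sum.inl n), b (Sum.inr m)⁆ = ω n m • b (Sum.inr (n + m)))
    (hXX : ∀ n m : ℤ, ⁅b (Sum.inr n), b (Sum.inr m)⁆ = 0)
    (σ : L ≃ₗ⁅ℂ⁆ L) :
    (∀ x ∈ Submodule.span ℂ (Set.range fun n : ℤ => b (Sum.inr n)),
      σ x ∈ Submodule.span ℂ (Set.range fun n : ℤ => b (Sum.inr n))) ∧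
    ∃ (ρ : Module.End ℂ L) (ws : List L) (ε : ℤ) (α : ℂ) (γ : ℤ → ℂ) (ξ : ℤ → ℂ),
      (∀ w ∈ ws, w ∈ Submodule.span ℂ (Set.range fun n : ℤ => b (Sum.inr n))) ∧
      ρ = (ws.map fun w => (1 : Module.End ℂ L) + LieAlgebra.ad ℂ L w).prod ∧
      (ε = 1 ∨ ε = -1) ∧ α ≠ 0 ∧ (∀ n : ℤ, ξ n ≠ 0) ∧
      (∀ n : ℤ, ρ (σ (b (Sum.inl n))) =
        ((ε : ℂ) * α ^ n) • b (Sum.inl (ε * n)) + γ n • b (Sum.inr (ε * n))) ∧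
      (∀ n : ℤ, ρ (σ (b (Sum.inr n))) = ξ n • b (Sum.inr (ε * n))) ∧
      ((∀ n m : ℤ, ω n m = omegaA lam n m) → γ 0 = 0) := by
  have hω0 : ∀ k, ω 0 k = k := by
    rcases hω with h | h <;> intro k <;> cases lam <;> simp [h, omegaA, omegaB, lamTerm]
  have hI := span_range_inr_eq_ker_coordL b
  have hσX n : coordL b (σ (b (Sum.inr n))) = 0 :=
    coordL_lieEquiv_apply_eq_zero b ω hLL hLX hXX σ (coordL_inr b n)
  refine ⟨fun x hx => ?_, ?_⟩
  · rw [hI] at hx ⊢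
    exact coordL_lieEquiv_apply_eq_zero b ω hLL hLX hXX σ hx
  obtain ⟨ε, α, hε, hα, hσL⟩ := exists_coordL_lieEquiv_inl_eq b ω hLL hLX hXX σ
  have hε0 : (ε : ℂ) ≠ 0 := by rcases hε with rfl | rfl <;> norm_num
  obtain ⟨w, hw, hwL, hw0⟩ := exists_oneAddAd_apply_eq b ω hLL hLX hXX hω0 hε0
    (u := σ (b (Sum.inl 0))) (by simpa using hσL 0)
  set ρ := oneAddAd (R := ℂ) w hw
  have hρL v : coordL b (ρ v) = coordL b v := by
    simp [ρ, oneAddAd_apply, coordL_lie_eq_zero_of_left b ω hLL hLX hXX hwL]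
  have hρX n : ρ (σ (b (Sum.inr n))) = σ (b (Sum.inr n)) := by
    rw [oneAddAd_apply, lie_eq_zero_of_coordL_eq_zero b ω hLL hLX hXX hwL (hσX n), add_zero]
  obtain ⟨hτL, hτX, hγ₀⟩ := normal_form_of_map_inl_zero_eq b ω hLL hLX hXX hω0
    (ρ.comp σ.toLieHom) hε hα hw0 (fun n => (hρL _).trans (hσL n)) (fun n => (hρL _).trans (hσX n))
  refine ⟨ρ, [w], ε, α, fun n => coordX b (ρ (σ (b (Sum.inl n)))) (ε * n),
    fun n => coordX b (ρ (σ (b (Sum.inr n)))) (ε * n), by simpa [hI] using hwL,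
    by simp [ρ, oneAddAd], hε, hα, fun n hξ => ?_, hτL, hτX, fun hA => ?_⟩
  · have h : ρ (σ (b (Sum.inr n))) = 0 := by simpa [hξ] using hτX n
    rw [hρX] at h
    exact b.ne_zero (Sum.inr n) (σ.injective (h.trans σ.map_zero.symm))
  · have hγ : coordX b (ρ (σ (b (Sum.inl 0)))) (ε * 0) = coordX b (σ (b (Sum.inl 0))) 0 := by
      simp [ρ, hw0]
    exact hγ.trans (eq_zero_of_forall_mul_omegaA_eq_zero fun m => hA m 0 ▸ hγ₀ m)
end

section
/- Let λ ∈ ℂ ∪ {∞}, let X denote either A or B, and let d be a derivation of W_X(λ) of degree zero, i.e., d(L_n) = α_n·L_n + β_n·X_n and d(X_n) = η_n·L_n + θ_n·X_n for all n ∈ ℤ, where α_n, β_n, η_n, θ_n ∈ ℂ. Then η_n = 0 for all n ∈ ℤ; that is, d maps the subspace spanned by {X_n : n ∈ ℤ} into itself. -/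
section DegreeZeroDerivation

variable {R L : Type*} [CommRing R] [LieRing L] [LieAlgebra R L] {b : Module.Basis (ℤ ⊕ ℤ) R L}
  {ω : ℤ → ℤ → R} {d : L →ₗ[R] L} {α β η θ : ℤ → R}

theorem derivation_eta_mul_omega_comm
    (hLX : ∀ n m : ℤ, ⁅b (Sum.inl n), b (Sum.inr m)⁆ = ω n m • b (Sum.inr (n + m)))
    (hXX : ∀ n m : ℤ, ⁅b (Sum.inr n), b (Sum.inr m)⁆ = 0)
    (hd : ∀ x y : L, d ⁅x, y⁆ = ⁅d x, y⁆ + ⁅x, d y⁆)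
    (hdX : ∀ n : ℤ, d (b (Sum.inr n)) = η n • b (Sum.inl n) + θ n • b (Sum.inr n))
    (n m : ℤ) : η n * ω n m = η m * ω m n := by
  have h := congrArg (b.repr · (Sum.inr (n + m))) (hd (b (Sum.inr n)) (b (Sum.inr m)))
  simp only [hXX, hdX, add_lie, lie_add, smul_lie, lie_smul, hLX,
    ← lie_skew (b (Sum.inr n)) (b (Sum.inl m)), add_comm m n] at h
  simpa [← sub_eq_add_neg, sub_eq_zero, eq_comm] using h.symm

theorem derivation_omega_mul_eta_add
    (hLL : ∀ n m : ℤ,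
      ⁅b (Sum.inl n), b (Sum.inl m)⁆ = ((m : R) - (n : R)) • b (Sum.inl (n + m)))
    (hLX : ∀ n m : ℤ, ⁅b (Sum.inl n), b (Sum.inr m)⁆ = ω n m • b (Sum.inr (n + m)))
    (hXX : ∀ n m : ℤ, ⁅b (Sum.inr n), b (Sum.inr m)⁆ = 0)
    (hd : ∀ x y : L, d ⁅x, y⁆ = ⁅d x, y⁆ + ⁅x, d y⁆)
    (hdL : ∀ n : ℤ, d (b (Sum.inl n)) = α n • b (Sum.inl n) + β n • b (Sum.inr n))
    (hdX : ∀ n : ℤ, d (b (Sum.inr n)) = η n • b (Sum.inl n) + θ n • b (Sum.inr n))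
    (n m : ℤ) : ω n m * η (n + m) = ((m : R) - n) * η m := by
  have h := congrArg (b.repr · (Sum.inl (n + m))) (hd (b (Sum.inl n)) (b (Sum.inr m)))
  simp only [hLX, map_smul, hdL, hdX, add_lie, lie_add, smul_lie, lie_smul, hXX, hLL] at h
  simpa [mul_comm] using h

end DegreeZeroDerivation

theorem omegaA_of_ne_zero (lam : Option ℂ) (n : ℤ) {m : ℤ} (hm : m ≠ 0) :
    omegaA lam n m = n + m := by
  simp [omegaA, hm]

theorem omegaB_of_add_ne_zero (lam : Option ℂ) {n m : ℤ} (h : n + m ≠ 0) :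
    omegaB lam n m = m := by
  simp [omegaB, h]

theorem eta_eq_zero_of_omegaA {lam : Option ℂ} {η : ℤ → ℂ}
    (hcomm : ∀ n m, η n * omegaA lam n m = η m * omegaA lam m n)
    (hadd : ∀ n m, omegaA lam n m * η (n + m) = ((m : ℂ) - n) * η m) (n : ℤ) : η n = 0 := by
  have hconst : ∀ {n m : ℤ}, n ≠ 0 → m ≠ 0 → n + m ≠ 0 → η n = η m := by
    intro n m hn hm hnm
    have h := hcomm n m
    rw [omegaA_of_ne_zero lam n hm, omegaA_of_ne_zero lam m hn, add_comm (m : ℂ)] at h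
    exact mul_right_cancel₀ (by exact_mod_cast hnm) h
  have h2 : η 2 = 0 := by
    have h := hadd 1 1
    rw [omegaA_of_ne_zero lam 1 one_ne_zero] at h
    norm_num at h
    exact h
  have h1 : η 1 = 0 := (hconst one_ne_zero two_ne_zero (by norm_num)).trans h2
  rcases eq_or_ne n 0 with rfl | hn
  · simpa [omegaA_of_ne_zero lam 0 one_ne_zero, h1] using hcomm 0 1
  rcases eq_or_ne n (-2) with rfl | hn2
  · exact (hconst (by norm_num) one_ne_zero (by norm_num)).trans h1
  · exact (hconst hn two_ne_zero (by omega)).trans h2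

theorem eta_eq_zero_of_omegaB {lam : Option ℂ} {η : ℤ → ℂ}
    (hcomm : ∀ n m, η n * omegaB lam n m = η m * omegaB lam m n)
    (hadd : ∀ n m, omegaB lam n m * η (n + m) = ((m : ℂ) - n) * η m) (n : ℤ) : η n = 0 := by
  have hlin : ∀ {n m : ℤ}, n + m ≠ 0 → η n * m = η m * n := by
    intro n m h
    have h' : m + n ≠ 0 := by rwa [add_comm]
    simpa [omegaB_of_add_ne_zero lam h, omegaB_of_add_ne_zero lam h'] using hcomm n m
  have h1 : η 1 = 0 := by
    have h12 := hlin (n := 1) (m := 2) (by norm_num)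
    have h31 := hlin (n := 3) (m := 1) (by norm_num)
    have h := hadd 1 2
    rw [omegaB_of_add_ne_zero lam (by norm_num)] at h
    push_cast at h12 h31 h
    linear_combination (h - 2 * h31 - h12) / 4
  have h2 : η 2 = 0 := by simpa [h1, eq_comm] using hlin (n := 1) (m := 2) (by norm_num)
  rcases eq_or_ne n (-1) with rfl | hn
  · simpa [h2] using hlin (n := -1) (m := 2) (by norm_num)
  · simpa [h1] using hlin (n := n) (m := 1) (by omega)

/-- a degree-zero derivation of `W_X(λ)` (for `X = A` or `X = B`) maps the
subspace spanned by `{X_n : n ∈ ℤ}` into itself, i.e. the coefficients `η_n` vanish. -/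
theorem stmt_17 (lam : Option ℂ) (L : Type) [LieRing L] [LieAlgebra ℂ L]
    (b : Module.Basis (ℤ ⊕ ℤ) ℂ L) (ω : ℤ → ℤ → ℂ)
    (hω : (∀ n m : ℤ, ω n m = omegaA lam n m) ∨ (∀ n m : ℤ, ω n m = omegaB lam n m))
    (hLL : ∀ n m : ℤ,
      ⁅b (Sum.inl n), b (Sum.inl m)⁆ = ((m : ℂ) - (n : ℂ)) • b (Sum.inl (n + m)))
    (hLX : ∀ n m : ℤ, ⁅b (Sum.inl n), b (Sum.inr m)⁆ = ω n m • b (Sum.inr (n + m)))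
    (hXX : ∀ n m : ℤ, ⁅b (Sum.inr n), b (Sum.inr m)⁆ = 0)
    (d : L →ₗ[ℂ] L)
    (hd : ∀ x y : L, d ⁅x, y⁆ = ⁅d x, y⁆ + ⁅x, d y⁆)
    (α β η θ : ℤ → ℂ)
    (hdL : ∀ n : ℤ, d (b (Sum.inl n)) = α n • b (Sum.inl n) + β n • b (Sum.inr n))
    (hdX : ∀ n : ℤ, d (b (Sum.inr n)) = η n • b (Sum.inl n) + θ n • b (Sum.inr n)) :
    ∀ n : ℤ, η n = 0 := by
  have hcomm := derivation_eta_mul_omega_comm hLX hXX hd hdX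
  have hadd := derivation_omega_mul_eta_add hLL hLX hXX hd hdL hdX
  rcases hω with hA | hB
  · obtain rfl : ω = omegaA lam := funext₂ hA
    exact eta_eq_zero_of_omegaA hcomm hadd
  · obtain rfl : ω = omegaB lam := funext₂ hB
    exact eta_eq_zero_of_omegaB hcomm hadd
end
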